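/- arXiv:2603.06039 — 6 statements merged into one kernel-verified Lean document; each statement's English description precedes it below -/
import Mathlib

section
/- For k = 2 routers and instances all of whose packets have length 1 or 2, the competitive ratio of Greedy is at least 3/2 (for any tie-breaking rule): for every ε > 0 and every constant b, there exists an instance I on 2 routers, all of whose packets have length 1 or 2, such that Greedy(I) > (3/2 − ε)·Opt(I) + b. -/
/-!
# Packet forwarding on a line network

There are `k` active routers `1, …, k`; router `i` forwards packets to router `i+1`.
An instance is a finite collection of packets; packet `p` has a release time `rel p : ℕ`,
a start router `start p ∈ {1, …, k}` and a length `len p ≥ 1` with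
`start p + len p − 1 ≤ k`; `p` must be forwarded by routers
`start p, start p + 1, …, start p + len p − 1` in this order.
-/

/-- An instance of online packet forwarding on a line network with `k` active routers.
Packets are indexed by `Fin n`. -/
structure PInstance (k : ℕ) where
  n : ℕ
  rel : Fin n → ℕ
  start : Fin n → ℕ
  len : Fin n → ℕ

namespace PInstance

variable {k : ℕ}

/-- The instance is well-formed: start routers are at least `1`, lengths are at least `1`,
and every packet fits on the line: `start p + len p − 1 ≤ k`. -/
def Valid (I : PInstance k) : Prop :=
  ∀ p, 1 ≤ I.start p ∧ 1 ≤ I.len p ∧ I.start p + I.len p ≤ k + 1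

/-- All packets of the instance have length `1` or `2`. -/
def Short (I : PInstance k) : Prop :=
  ∀ p, I.len p = 1 ∨ I.len p = 2

/-- A schedule assigns to each packet `p` and each hop index `j < len p` (corresponding to
router `start p + j`) the time step at which that router forwards `p`.  Values at
hop indices `j ≥ len p` are irrelevant. -/
abbrev Sched (I : PInstance k) := Fin I.n → ℕ → ℕ

/-- `arr I S p j` is the time from which hop `j` of packet `p` is available:
packet `p` is available at its start router from time `rel p`, and a packet forwarded
at time `t` is available at the next router from time `t + 1`. -/
def arr (I : PInstance k) (S : Sched I) (p : Fin I.n) : ℕ → ℕ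
  | 0 => I.rel p
  | j + 1 => S p j + 1

/-- Feasibility of a schedule: every hop is forwarded no earlier than the time from which
it is available (this includes releases and the order of the hops), and each router
forwards at most one packet in each time step. -/
def Feasible (I : PInstance k) (S : Sched I) : Prop :=
  (∀ p j, j < I.len p → arr I S p j ≤ S p j) ∧
  (∀ p q jp jq, jp < I.len p → jq < I.len q →
    I.start p + jp = I.start q + jq → S p jp = S q jq → p = q)

/-- Completion time `C(p)`: one plus the time step in which the last router forwards `p`. -/
def comp (I : PInstance k) (S : Sched I) (p : Fin I.n) : ℕ :=
  S p (I.len p - 1) + 1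

/-- Flow time of packet `p`: `C(p) − r(p)`. -/
def flowTime (I : PInstance k) (S : Sched I) (p : Fin I.n) : ℕ :=
  comp I S p - I.rel p

/-- Cost of a schedule: the maximum flow time over all packets of the instance. -/
def cost (I : PInstance k) (S : Sched I) : ℕ :=
  Finset.univ.sup (flowTime I S)

/-- `Opt(I)`: the minimum cost over all feasible schedules. -/
noncomputable def opt (I : PInstance k) : ℕ :=
  sInf {c | ∃ S : Sched I, Feasible I S ∧ cost I S = c}

/-- Hop `j` of packet `p` is waiting (available but not yet forwarded) at time `t`. -/
def Waiting (I : PInstance k) (S : Sched I) (p : Fin I.n) (j t : ℕ) : Prop :=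
  j < I.len p ∧ arr I S p j ≤ t ∧ t ≤ S p j

/-- Remaining length `ℓ(p,t)`: the number of routers that still need to forward `p`
at time `t` (under schedule `S`). -/
noncomputable def remLen (I : PInstance k) (S : Sched I) (p : Fin I.n) (t : ℕ) : ℕ :=
  Set.ncard {j : ℕ | j < I.len p ∧ t ≤ S p j}

/-- Priority `π(p,t) = (t − r(p)) + ℓ(p,t)`. -/
noncomputable def prio (I : PInstance k) (S : Sched I) (p : Fin I.n) (t : ℕ) : ℕ :=
  (t - I.rel p) + remLen I S p t

/-- A schedule is zealous if, at every time step and every router at which some packet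
is available (waiting), it forwards a packet there. -/
def Zealous (I : PInstance k) (S : Sched I) : Prop :=
  ∀ t i, (∃ p j, Waiting I S p j t ∧ I.start p + j = i) →
    ∃ q jq, Waiting I S q jq t ∧ I.start q + jq = i ∧ S q jq = t

/-- `S` is a schedule that Greedy (with some tie-breaking rule) produces: it is feasible,
and in every time step, every router at which at least one packet is waiting forwards a
waiting packet of maximum priority among the packets waiting there. -/
def IsGreedy (I : PInstance k) (S : Sched I) : Prop :=
  Feasible I S ∧
  ∀ t i, (∃ p j, Waiting I S p j t ∧ I.start p + j = i) →
    ∃ q jq, Waiting I S q jq t ∧ I.start q + jq = i ∧ S q jq = t ∧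
      ∀ p j, Waiting I S p j t → I.start p + j = i → prio I S p t ≤ prio I S q t

/-- The number of packets released by time `t` that still need to be forwarded by
router `i` at time `t` under schedule `S`. -/
noncomputable def needs (I : PInstance k) (S : Sched I) (i t : ℕ) : ℕ :=
  Set.ncard {p : Fin I.n | I.rel p ≤ t ∧ ∃ j, j < I.len p ∧ I.start p + j = i ∧ t ≤ S p j}

end PInstance

section GreedyLB

open PInstance

/-- The hard instance: `C` packets of length 1 released at time 0 at router 1 ("c"-packets,
indices `< C`), `C-1` packets of length 2 released at times `2,…,C` at router 1
("a"-packets, indices in `[C, 2C-1)`, the packet with index `v` released at `v - C + 2`),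
and `2C` packets of length 1 released at time `C+1` at router 2 ("b"-packets,
indices in `[2C-1, 4C-1)`). -/
def myI (C : ℕ) : PInstance 2 where
  n := 4 * C - 1
  rel := fun p => if (p : ℕ) < C then 0 else if (p : ℕ) < 2 * C - 1 then (p : ℕ) - C + 2 else C + 1
  start := fun p => if (p : ℕ) < 2 * C - 1 then 1 else 2
  len := fun p => if (p : ℕ) < C then 1 else if (p : ℕ) < 2 * C - 1 then 2 else 1

lemma myI_n (C : ℕ) : (myI C).n = 4 * C - 1 := rfl

lemma myI_rel (C : ℕ) (p : Fin (myI C).n) :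
    (myI C).rel p = if (p : ℕ) < C then 0 else if (p : ℕ) < 2 * C - 1 then (p : ℕ) - C + 2 else C + 1 := rfl

lemma myI_start (C : ℕ) (p : Fin (myI C).n) :
    (myI C).start p = if (p : ℕ) < 2 * C - 1 then 1 else 2 := rfl

lemma myI_len (C : ℕ) (p : Fin (myI C).n) :
    (myI C).len p = if (p : ℕ) < C then 1 else if (p : ℕ) < 2 * C - 1 then 2 else 1 := rfl

lemma myI_valid (C : ℕ) : (myI C).Valid := by
  intro p
  rw [myI_start, myI_len]
  split_ifs <;> omega

lemma myI_short (C : ℕ) : (myI C).Short := by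
  intro p
  rw [myI_len]
  split_ifs <;> omega

/-! ### remaining-length computations -/

lemma remLen_le_len {k : ℕ} (I : PInstance k) (S : Sched I) (p : Fin I.n) (t : ℕ) :
    remLen I S p t ≤ I.len p := by
  unfold remLen
  have hsub : {j : ℕ | j < I.len p ∧ t ≤ S p j} ⊆ ↑(Finset.range (I.len p)) := by
    intro j hj
    simp only [Finset.coe_range, Set.mem_Iio]
    exact hj.1
  calc Set.ncard {j : ℕ | j < I.len p ∧ t ≤ S p j}
      ≤ Set.ncard (↑(Finset.range (I.len p)) : Set ℕ) :=
        Set.ncard_le_ncard hsub (Finset.range (I.len p)).finite_toSet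
    _ = I.len p := by rw [Set.ncard_coe_finset, Finset.card_range]

lemma remLen_len1 {k : ℕ} (I : PInstance k) (S : Sched I) (p : Fin I.n) (t : ℕ)
    (h1 : I.len p = 1) (ht : t ≤ S p 0) : remLen I S p t = 1 := by
  unfold remLen
  have : {j : ℕ | j < I.len p ∧ t ≤ S p j} = {0} := by
    ext j
    simp only [Set.mem_setOf_eq, Set.mem_singleton_iff, h1]
    constructor
    · rintro ⟨hj, -⟩; omega
    · rintro rfl; exact ⟨by omega, ht⟩
  rw [this, Set.ncard_singleton]

lemma remLen_len2_fresh {k : ℕ} (I : PInstance k) (S : Sched I) (p : Fin I.n) (t : ℕ)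
    (h2 : I.len p = 2) (ht0 : t ≤ S p 0) (ht1 : t ≤ S p 1) : remLen I S p t = 2 := by
  unfold remLen
  have : {j : ℕ | j < I.len p ∧ t ≤ S p j} = {0, 1} := by
    ext j
    simp only [Set.mem_setOf_eq, Set.mem_insert_iff, Set.mem_singleton_iff, h2]
    constructor
    · rintro ⟨hj, -⟩; omega
    · rintro (rfl | rfl)
      · exact ⟨by omega, ht0⟩
      · exact ⟨by omega, ht1⟩
  rw [this, Set.ncard_pair (by omega)]

lemma remLen_len2_mid {k : ℕ} (I : PInstance k) (S : Sched I) (p : Fin I.n) (t : ℕ)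
    (h2 : I.len p = 2) (ht0 : S p 0 < t) (ht1 : t ≤ S p 1) : remLen I S p t = 1 := by
  unfold remLen
  have : {j : ℕ | j < I.len p ∧ t ≤ S p j} = {1} := by
    ext j
    simp only [Set.mem_setOf_eq, Set.mem_singleton_iff, h2]
    constructor
    · rintro ⟨hj, hS⟩
      interval_cases j
      · omega
      · rfl
    · rintro rfl; exact ⟨by omega, ht1⟩
  rw [this, Set.ncard_singleton]

end GreedyLB

section GreedyLB2

open PInstance

/-- A near-optimal schedule for `myI C`: at router 1, c-packets `0,1` go first, then all
a-packets as released (times `2,…,C`), then the remaining c-packets (times `C+1,…,2C-2`);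
at router 2, the a-packets go right through (times `3,…,C+1`) and then all b-packets
(times `C+2,…,3C+1`). -/
def S0 (C : ℕ) : Sched (myI C) := fun p j =>
  if (p : ℕ) < C then (if (p : ℕ) < 2 then (p : ℕ) else C + (p : ℕ) - 1)
  else if (p : ℕ) < 2 * C - 1 then (if j = 0 then (p : ℕ) - C + 2 else (p : ℕ) - C + 3)
  else (p : ℕ) - (2 * C - 1) + C + 2

lemma S0_feasible (C : ℕ) (hC : 2 ≤ C) : Feasible (myI C) (S0 C) := by
  constructor
  · intro p j hj
    have hv : (p : ℕ) < 4 * C - 1 := p.isLt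
    rw [myI_len] at hj
    match j with
    | 0 =>
      show (myI C).rel p ≤ S0 C p 0
      rw [myI_rel]
      unfold S0
      split_ifs at hj ⊢ <;> first | omega | (exfalso ; assumption)
    | 1 =>
      show S0 C p 0 + 1 ≤ S0 C p 1
      unfold S0
      split_ifs at hj ⊢ <;> first | omega | (exfalso ; assumption)
    | (j + 2) =>
      exfalso; split_ifs at hj <;> omega
  · intro p q jp jq hp hq hrt hS
    have hv : (p : ℕ) < 4 * C - 1 := p.isLt
    have hw : (q : ℕ) < 4 * C - 1 := q.isLt
    rw [myI_len] at hp hq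
    rw [myI_start, myI_start] at hrt
    unfold S0 at hS
    apply Fin.ext
    split_ifs at hp hq hrt hS <;> omega

lemma S0_cost (C : ℕ) (hC : 2 ≤ C) : cost (myI C) (S0 C) ≤ 2 * C + 1 := by
  apply Finset.sup_le
  intro p _
  have hv : (p : ℕ) < 4 * C - 1 := p.isLt
  unfold flowTime comp
  rw [myI_rel, myI_len]
  unfold S0
  split_ifs <;> omega

lemma myI_opt_le (C : ℕ) (hC : 2 ≤ C) : (myI C).opt ≤ 2 * C + 1 := by
  have hmem : cost (myI C) (S0 C) ∈ {c | ∃ S : Sched (myI C), Feasible (myI C) S ∧ cost (myI C) S = c} :=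
    ⟨S0 C, S0_feasible C hC, rfl⟩
  exact le_trans (Nat.sInf_le hmem) (S0_cost C hC)

end GreedyLB2

section GreedyLB3

open PInstance

variable {C : ℕ} {S : Sched (myI C)}

lemma len_pos (p : Fin (myI C).n) : 0 < (myI C).len p := by
  rw [myI_len]; (try simp only [Fin.val_mk]); split_ifs <;> omega

lemma rel_le_S0 (hF : Feasible (myI C) S) (p : Fin (myI C).n) : (myI C).rel p ≤ S p 0 :=
  hF.1 p 0 (len_pos p)

lemma S0_lt_S1 (hF : Feasible (myI C) S) (p : Fin (myI C).n) (h : (myI C).len p = 2) :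
    S p 0 + 1 ≤ S p 1 := hF.1 p 1 (by omega)

/-- At any time `t < C`, some c-packet has not yet been forwarded. -/
lemma exists_c_waiting (hC : 2 ≤ C) (hF : Feasible (myI C) S) {t : ℕ} (ht : t < C) :
    ∃ p : Fin (myI C).n, (p : ℕ) < C ∧ t ≤ S p 0 := by
  by_contra hcon
  push_neg at hcon
  have hCn : ∀ i : Fin C, (i : ℕ) < (myI C).n := by
    intro i; have := i.isLt; rw [myI_n]; omega
  have hpf : ∀ i : Fin C, S ⟨(i : ℕ), hCn i⟩ 0 < t := fun i => hcon _ i.isLt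
  have hinj : Function.Injective (fun i : Fin C => (⟨S ⟨(i : ℕ), hCn i⟩ 0, hpf i⟩ : Fin t)) := by
    intro i j hij
    have h1 : S ⟨(i : ℕ), hCn i⟩ 0 = S ⟨(j : ℕ), hCn j⟩ 0 := by
      simpa only [Fin.mk.injEq] using hij
    have h2 := hF.2 ⟨(i : ℕ), hCn i⟩ ⟨(j : ℕ), hCn j⟩ 0 0
      (by rw [myI_len]; have := i.isLt; (try simp only [Fin.val_mk]); split_ifs <;> omega)
      (by rw [myI_len]; have := j.isLt; (try simp only [Fin.val_mk]); split_ifs <;> omega)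
      (by rw [myI_start, myI_start]; have := i.isLt; have := j.isLt; (try simp only [Fin.val_mk]); split_ifs <;> omega)
      h1
    have h3 := congrArg Fin.val h2
    simp only [Fin.val_mk] at h3
    exact Fin.ext h3
  have := Fintype.card_le_of_injective _ hinj
  simp only [Fintype.card_fin] at this
  omega

/-- At every time `t < C`, Greedy forwards a c-packet at router 1. -/
lemma c_at (hC : 2 ≤ C) (hG : IsGreedy (myI C) S) {t : ℕ} (ht : t < C) :
    ∃ p : Fin (myI C).n, (p : ℕ) < C ∧ S p 0 = t := by
  obtain ⟨c, hc1, hc2⟩ := exists_c_waiting hC hG.1 ht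
  have hlenc : (myI C).len c = 1 := by rw [myI_len]; (try simp only [Fin.val_mk]); split_ifs <;> omega
  have hrelc : (myI C).rel c = 0 := by rw [myI_rel]; (try simp only [Fin.val_mk]); split_ifs <;> omega
  have hstartc : (myI C).start c = 1 := by rw [myI_start]; (try simp only [Fin.val_mk]); split_ifs <;> omega
  have hwait : Waiting (myI C) S c 0 t := by
    refine ⟨by omega, ?_, hc2⟩
    show (myI C).rel c ≤ t
    omega
  obtain ⟨q, jq, wq, hrt, hSq, hmax⟩ := hG.2 t 1 ⟨c, 0, hwait, by omega⟩
  have hlq := wq.1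
  rw [myI_len] at hlq
  rw [myI_start] at hrt
  have hjq : jq = 0 ∧ (q : ℕ) < 2 * C - 1 := by split_ifs at hlq hrt <;> omega
  obtain ⟨hjq0, hq2⟩ := hjq
  subst hjq0
  by_cases hqc : (q : ℕ) < C
  · exact ⟨q, hqc, hSq⟩
  · exfalso
    have hcmp := hmax c 0 hwait (by omega)
    have hpc : prio (myI C) S c t = t + 1 := by
      unfold prio
      rw [remLen_len1 _ _ _ _ hlenc hc2, hrelc]
      omega
    have hlenq : (myI C).len q = 2 := by rw [myI_len]; (try simp only [Fin.val_mk]); split_ifs <;> omega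
    have hrelq : (myI C).rel q = (q : ℕ) - C + 2 := by rw [myI_rel]; (try simp only [Fin.val_mk]); split_ifs <;> omega
    have hrelqt : (myI C).rel q ≤ t := wq.2.1
    have hpq : prio (myI C) S q t ≤ t := by
      unfold prio
      have h2 := remLen_le_len (myI C) S q t
      omega
    omega

/-- Every c-packet is forwarded before time `C`. -/
lemma c_done (hC : 2 ≤ C) (hG : IsGreedy (myI C) S) :
    ∀ p : Fin (myI C).n, (p : ℕ) < C → S p 0 < C := by
  by_contra hcon
  push_neg at hcon
  obtain ⟨p0, hp0, hp0S⟩ := hcon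
  have H : ∀ t : Fin C, ∃ p : Fin (myI C).n, (p : ℕ) < C ∧ S p 0 = (t : ℕ) :=
    fun t => c_at hC hG t.isLt
  choose f hf1 hf2 using H
  have hinj : Function.Injective
      (fun i : Fin (C + 1) =>
        if h : (i : ℕ) < C then (⟨((f ⟨(i : ℕ), h⟩ : Fin (myI C).n) : ℕ), hf1 _⟩ : Fin C)
        else ⟨(p0 : ℕ), hp0⟩) := by
    intro i j hij
    simp only [] at hij
    apply Fin.ext
    by_cases hi : (i : ℕ) < C <;> by_cases hj : (j : ℕ) < C
    · rw [dif_pos hi, dif_pos hj] at hij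
      simp only [Fin.mk.injEq] at hij
      have h2 : f ⟨(i : ℕ), hi⟩ = f ⟨(j : ℕ), hj⟩ := Fin.ext hij
      have h3 := hf2 ⟨(i : ℕ), hi⟩
      have h4 := hf2 ⟨(j : ℕ), hj⟩
      simp only [Fin.val_mk] at h3 h4
      rw [h2] at h3
      omega
    · exfalso
      rw [dif_pos hi, dif_neg hj] at hij
      simp only [Fin.mk.injEq] at hij
      have h2 : f ⟨(i : ℕ), hi⟩ = p0 := Fin.ext hij
      have h3 := hf2 ⟨(i : ℕ), hi⟩
      simp only [Fin.val_mk] at h3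
      rw [h2] at h3
      omega
    · exfalso
      rw [dif_neg hi, dif_pos hj] at hij
      simp only [Fin.mk.injEq] at hij
      have h2 : p0 = f ⟨(j : ℕ), hj⟩ := Fin.ext hij
      have h3 := hf2 ⟨(j : ℕ), hj⟩
      simp only [Fin.val_mk] at h3
      rw [← h2] at h3
      omega
    · have := i.isLt; have := j.isLt; omega
  have := Fintype.card_le_of_injective _ hinj
  simp only [Fintype.card_fin] at this
  omega

/-- The a-packet with index `m` is forwarded by router 1 exactly at time `m`. -/
lemma a_first (hC : 2 ≤ C) (hG : IsGreedy (myI C) S) :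
    ∀ m, ∀ p : Fin (myI C).n, (p : ℕ) = m → C ≤ m → m < 2 * C - 1 → S p 0 = m := by
  intro m
  induction m using Nat.strong_induction_on with
  | _ m IH =>
  intro p hm h1 h2
  have hF := hG.1
  have hlenp : (myI C).len p = 2 := by rw [myI_len]; (try simp only [Fin.val_mk]); split_ifs <;> omega
  have hrelp : (myI C).rel p = m - C + 2 := by rw [myI_rel]; (try simp only [Fin.val_mk]); split_ifs <;> omega
  have hstartp : (myI C).start p = 1 := by rw [myI_start]; (try simp only [Fin.val_mk]); split_ifs <;> omega
  have harr0 : (myI C).rel p ≤ S p 0 := rel_le_S0 hF p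
  have harr1 : S p 0 + 1 ≤ S p 1 := S0_lt_S1 hF p hlenp
  -- packet p has not been forwarded by router 1 before time m
  have hge : m ≤ S p 0 := by
    by_contra hlt
    push_neg at hlt
    by_cases hc : S p 0 < C
    · obtain ⟨c, hc1, hc2⟩ := c_at hC hG hc
      have h2' := hF.2 p c 0 0 (by omega)
        (by rw [myI_len]; (try simp only [Fin.val_mk]); split_ifs <;> omega)
        (by rw [hstartp, myI_start]; (try simp only [Fin.val_mk]); split_ifs <;> omega)
        hc2.symm
      have := congrArg Fin.val h2'
      try simp only [Fin.val_mk] at this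
      omega
    · have hsn : S p 0 < (myI C).n := by rw [myI_n]; omega
      have hq' := IH (S p 0) (by omega) ⟨S p 0, hsn⟩ rfl (by omega) (by omega)
      have h2' := hF.2 p ⟨S p 0, hsn⟩ 0 0 (by omega)
        (by rw [myI_len]; (try simp only [Fin.val_mk]); split_ifs <;> omega)
        (by rw [hstartp, myI_start]; (try simp only [Fin.val_mk]); split_ifs <;> omega)
        hq'.symm
      have := congrArg Fin.val h2'
      try simp only [Fin.val_mk] at this
      omega
  -- p is waiting at router 1 at time m
  have hwait : Waiting (myI C) S p 0 m := by
    refine ⟨by omega, ?_, hge⟩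
    show (myI C).rel p ≤ m
    omega
  obtain ⟨q, jq, wq, hrt, hSq, hmax⟩ := hG.2 m 1 ⟨p, 0, hwait, by omega⟩
  have hlq := wq.1
  rw [myI_len] at hlq
  rw [myI_start] at hrt
  have hjq : jq = 0 ∧ (q : ℕ) < 2 * C - 1 := by split_ifs at hlq hrt <;> omega
  obtain ⟨hjq0, hq2⟩ := hjq
  subst hjq0
  -- q cannot be a c-packet: those are all done before time C ≤ m
  have hqc : C ≤ (q : ℕ) := by
    by_contra hqc
    push_neg at hqc
    have := c_done hC hG q hqc
    have := wq.2.2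
    omega
  -- q is an a-packet with index ≥ m, by the induction hypothesis
  have hqm : m ≤ (q : ℕ) := by
    by_contra hqm
    push_neg at hqm
    have hq0 := IH (q : ℕ) hqm q rfl hqc hq2
    have := wq.2.2
    omega
  -- priority comparison forces q = p
  have hlenq : (myI C).len q = 2 := by rw [myI_len]; (try simp only [Fin.val_mk]); split_ifs <;> omega
  have hrelq : (myI C).rel q = (q : ℕ) - C + 2 := by rw [myI_rel]; (try simp only [Fin.val_mk]); split_ifs <;> omega
  have hcmp := hmax p 0 hwait (by omega)
  have hpp : prio (myI C) S p m = (m - (myI C).rel p) + 2 := by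
    unfold prio
    rw [remLen_len2_fresh _ _ _ _ hlenp hge (by omega)]
  have hq0ge : m ≤ S q 0 := wq.2.2
  have hq1ge : m ≤ S q 1 := by have := S0_lt_S1 hF q hlenq; omega
  have hpq : prio (myI C) S q m = (m - (myI C).rel q) + 2 := by
    unfold prio
    rw [remLen_len2_fresh _ _ _ _ hlenq hq0ge hq1ge]
  have hrelqm : (myI C).rel q ≤ m := wq.2.1
  rw [hrelq] at hrelqm
  have hqem : (q : ℕ) = m := by
    rw [hpp, hpq, hrelp, hrelq] at hcmp
    omega
  have hqp : q = p := Fin.ext (by omega)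
  rw [hqp] at hSq
  exact hSq

/-- The a-packet with index `m` is forwarded by router 2 exactly at time `m + 1`. -/
lemma a_second (hC : 2 ≤ C) (hG : IsGreedy (myI C) S) :
    ∀ m, ∀ p : Fin (myI C).n, (p : ℕ) = m → C ≤ m → m < 2 * C - 1 → S p 1 = m + 1 := by
  intro m
  induction m using Nat.strong_induction_on with
  | _ m IH =>
  intro p hm h1 h2
  have hF := hG.1
  have hlenp : (myI C).len p = 2 := by rw [myI_len]; (try simp only [Fin.val_mk]); split_ifs <;> omega
  have hrelp : (myI C).rel p = m - C + 2 := by rw [myI_rel]; (try simp only [Fin.val_mk]); split_ifs <;> omega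
  have hstartp : (myI C).start p = 1 := by rw [myI_start]; (try simp only [Fin.val_mk]); split_ifs <;> omega
  have hS0 : S p 0 = m := a_first hC hG m p hm h1 h2
  have harr1 : S p 0 + 1 ≤ S p 1 := S0_lt_S1 hF p hlenp
  have hwait : Waiting (myI C) S p 1 (m + 1) := by
    refine ⟨by omega, ?_, by omega⟩
    show S p 0 + 1 ≤ m + 1
    omega
  obtain ⟨q, jq, wq, hrt, hSq, hmax⟩ := hG.2 (m + 1) 2 ⟨p, 1, hwait, by omega⟩
  have hlq := wq.1
  rw [myI_len] at hlq
  rw [myI_start] at hrt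
  by_cases hqb : (q : ℕ) < 2 * C - 1
  · -- q is an a-packet with jq = 1
    have hjq1 : jq = 1 ∧ C ≤ (q : ℕ) := by split_ifs at hlq hrt <;> omega
    obtain ⟨hjq, hqc⟩ := hjq1
    subst hjq
    have hq0 : S q 0 = (q : ℕ) := a_first hC hG (q : ℕ) q rfl hqc hqb
    have harrq : S q 0 + 1 ≤ m + 1 := wq.2.1
    have hqem : (q : ℕ) = m := by
      by_contra hne
      have hlt : (q : ℕ) < m := by omega
      have hq1 := IH (q : ℕ) hlt q rfl hqc hqb
      have := wq.2.2
      omega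
    have hqp : q = p := Fin.ext (by omega)
    rw [hqp] at hSq
    exact hSq
  · -- q is a b-packet: contradiction via priorities
    exfalso
    have hjq0 : jq = 0 := by split_ifs at hlq hrt <;> omega
    subst hjq0
    have hlenq : (myI C).len q = 1 := by rw [myI_len]; (try simp only [Fin.val_mk]); split_ifs <;> omega
    have hrelq : (myI C).rel q = C + 1 := by rw [myI_rel]; (try simp only [Fin.val_mk]); split_ifs <;> omega
    have hcmp := hmax p 1 hwait (by omega)
    have hpp : prio (myI C) S p (m + 1) = ((m + 1) - (myI C).rel p) + 1 := by
      unfold prio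
      rw [remLen_len2_mid _ _ _ _ hlenp (by omega) (by omega)]
    have hpq : prio (myI C) S q (m + 1) = ((m + 1) - (C + 1)) + 1 := by
      unfold prio
      rw [remLen_len1 _ _ _ _ hlenq wq.2.2, hrelq]
    rw [hpp, hpq, hrelp] at hcmp
    omega

/-- No b-packet is forwarded before time `2C`. -/
lemma b_late (hC : 2 ≤ C) (hG : IsGreedy (myI C) S) :
    ∀ p : Fin (myI C).n, 2 * C - 1 ≤ (p : ℕ) → 2 * C ≤ S p 0 := by
  intro p hp
  have hF := hG.1
  have hv : (p : ℕ) < 4 * C - 1 := p.isLt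
  have hrelp : (myI C).rel p = C + 1 := by rw [myI_rel]; (try simp only [Fin.val_mk]); split_ifs <;> omega
  have h0 : C + 1 ≤ S p 0 := by have := rel_le_S0 hF p; omega
  by_contra hcon
  push_neg at hcon
  have hsn : S p 0 - 1 < (myI C).n := by rw [myI_n]; omega
  have hq := a_second hC hG (S p 0 - 1) ⟨S p 0 - 1, hsn⟩ rfl (by omega) (by omega)
  have h2' := hF.2 p ⟨S p 0 - 1, hsn⟩ 0 1
    (by rw [myI_len]; (try simp only [Fin.val_mk]); split_ifs <;> omega)
    (by rw [myI_len]; (try simp only [Fin.val_mk]); split_ifs <;> omega)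
    (by rw [myI_start, myI_start]; (try simp only [Fin.val_mk]); split_ifs <;> omega)
    (by rw [hq]; omega)
  have := congrArg Fin.val h2'
  try simp only [Fin.val_mk] at this
  omega

/-- Some b-packet is forwarded only at time `4C - 1` or later. -/
lemma b_big (hC : 2 ≤ C) (hG : IsGreedy (myI C) S) :
    ∃ p : Fin (myI C).n, 2 * C - 1 ≤ (p : ℕ) ∧ 4 * C - 1 ≤ S p 0 := by
  by_contra hcon
  push_neg at hcon
  have hF := hG.1
  have hlt : ∀ j : Fin (2 * C), 2 * C - 1 + (j : ℕ) < (myI C).n := by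
    intro j; have := j.isLt; rw [myI_n]; omega
  have key : ∀ j : Fin (2 * C),
      2 * C ≤ S ⟨2 * C - 1 + (j : ℕ), hlt j⟩ 0 ∧ S ⟨2 * C - 1 + (j : ℕ), hlt j⟩ 0 < 4 * C - 1 :=
    fun j => ⟨b_late hC hG _ (by simp), hcon _ (by simp)⟩
  have hpf : ∀ j : Fin (2 * C), S ⟨2 * C - 1 + (j : ℕ), hlt j⟩ 0 - 2 * C < 2 * C - 1 := by
    intro j; have := key j; omega
  have hinj : Function.Injective
      (fun j : Fin (2 * C) => (⟨S ⟨2 * C - 1 + (j : ℕ), hlt j⟩ 0 - 2 * C, hpf j⟩ : Fin (2 * C - 1))) := by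
    intro i j hij
    have h0 : S ⟨2 * C - 1 + (i : ℕ), hlt i⟩ 0 - 2 * C = S ⟨2 * C - 1 + (j : ℕ), hlt j⟩ 0 - 2 * C := by
      simpa only [Fin.mk.injEq] using hij
    have h1 : S ⟨2 * C - 1 + (i : ℕ), hlt i⟩ 0 = S ⟨2 * C - 1 + (j : ℕ), hlt j⟩ 0 := by
      have ki := (key i).1; have kj := (key j).1; omega
    have h2' := hF.2 ⟨2 * C - 1 + (i : ℕ), hlt i⟩ ⟨2 * C - 1 + (j : ℕ), hlt j⟩ 0 0
      (by rw [myI_len]; (try simp only [Fin.val_mk]); split_ifs <;> omega)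
      (by rw [myI_len]; (try simp only [Fin.val_mk]); split_ifs <;> omega)
      (by rw [myI_start, myI_start]; (try simp only [Fin.val_mk]); split_ifs <;> omega)
      h1
    have := congrArg Fin.val h2'
    simp only [Fin.val_mk] at this
    exact Fin.ext (by omega)
  have := Fintype.card_le_of_injective _ hinj
  simp only [Fintype.card_fin] at this
  omega

/-- Any greedy schedule on `myI C` has cost at least `3C - 1`. -/
lemma greedy_cost_lb (hC : 2 ≤ C) (hG : IsGreedy (myI C) S) :
    3 * C - 1 ≤ cost (myI C) S := by
  obtain ⟨p, hp1, hp2⟩ := b_big hC hG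
  have hlenp : (myI C).len p = 1 := by rw [myI_len]; (try simp only [Fin.val_mk]); split_ifs <;> omega
  have hrelp : (myI C).rel p = C + 1 := by rw [myI_rel]; (try simp only [Fin.val_mk]); split_ifs <;> omega
  have hflow : 3 * C - 1 ≤ flowTime (myI C) S p := by
    unfold flowTime comp
    rw [hlenp, hrelp]
    simp only [Nat.sub_self]
    omega
  exact le_trans hflow (Finset.le_sup (Finset.mem_univ p))

end GreedyLB3

/-- For `k = 2` routers and instances all of whose packets have length
`1` or `2`, the competitive ratio of Greedy is at least `3/2`, for any tie-breaking rule: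
for every `ε > 0` and every constant `b`, there exists an instance `I` on `2` routers with
all packet lengths in `{1, 2}` such that every schedule Greedy can produce on `I` has cost
greater than `(3/2 − ε)·Opt(I) + b`. -/
theorem greedy_lower_bound_two_routers (ε : ℝ) (hε : 0 < ε) (b : ℝ) :
    ∃ I : PInstance 2, I.Valid ∧ I.Short ∧
      ∀ S : PInstance.Sched I, I.IsGreedy S →
        (3 / 2 - ε) * (I.opt : ℝ) + b < (I.cost S : ℝ) := by
  classical
  set C : ℕ := 2 + ⌈(|b| + 4) / ε⌉₊ + ⌈|b| + 4⌉₊ with hCdef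
  have hC : 2 ≤ C := by omega
  refine ⟨myI C, myI_valid C, myI_short C, ?_⟩
  intro S hG
  have hopt : ((myI C).opt : ℝ) ≤ 2 * (C : ℝ) + 1 := by
    have h1 := myI_opt_le C hC
    have h2 : ((myI C).opt : ℝ) ≤ ((2 * C + 1 : ℕ) : ℝ) := Nat.cast_le.mpr h1
    have h3 : ((2 * C + 1 : ℕ) : ℝ) = 2 * (C : ℝ) + 1 := by push_cast; ring
    linarith
  have hcost : 3 * (C : ℝ) - 1 ≤ ((myI C).cost S : ℝ) := by
    have h1 := greedy_cost_lb hC hG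
    have h2 : ((3 * C - 1 : ℕ) : ℝ) ≤ ((myI C).cost S : ℝ) := Nat.cast_le.mpr h1
    have h0 : (1 : ℕ) ≤ 3 * C := by omega
    have h3 : ((3 * C - 1 : ℕ) : ℝ) = 3 * (C : ℝ) - 1 := by
      rw [Nat.cast_sub h0]; push_cast; ring
    linarith
  have hb : b ≤ |b| := le_abs_self b
  have hb0 : (0 : ℝ) ≤ |b| := abs_nonneg b
  have hCb : |b| + 4 ≤ (C : ℝ) := by
    have h1 : |b| + 4 ≤ (⌈|b| + 4⌉₊ : ℝ) := Nat.le_ceil _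
    have h2 : (⌈|b| + 4⌉₊ : ℕ) ≤ C := by omega
    have h3 : ((⌈|b| + 4⌉₊ : ℕ) : ℝ) ≤ (C : ℝ) := Nat.cast_le.mpr h2
    linarith
  have hεC : |b| + 4 ≤ ε * (C : ℝ) := by
    have h1 : (|b| + 4) / ε ≤ (⌈(|b| + 4) / ε⌉₊ : ℝ) := Nat.le_ceil _
    have h2 : (⌈(|b| + 4) / ε⌉₊ : ℕ) ≤ C := by omega
    have h3 : ((⌈(|b| + 4) / ε⌉₊ : ℕ) : ℝ) ≤ (C : ℝ) := Nat.cast_le.mpr h2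
    have h4 : (|b| + 4) / ε ≤ (C : ℝ) := le_trans h1 h3
    calc |b| + 4 = ((|b| + 4) / ε) * ε := by field_simp
      _ ≤ (C : ℝ) * ε := mul_le_mul_of_nonneg_right h4 hε.le
      _ = ε * (C : ℝ) := mul_comm _ _
  have hoptnn : (0 : ℝ) ≤ ((myI C).opt : ℝ) := Nat.cast_nonneg _
  have hCnn : (0 : ℝ) ≤ (C : ℝ) := Nat.cast_nonneg _
  rcases le_or_gt (3 / 2 - ε) 0 with hs | hs
  · have hneg : (3 / 2 - ε) * ((myI C).opt : ℝ) ≤ 0 :=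
      mul_nonpos_of_nonpos_of_nonneg hs hoptnn
    linarith
  · have hm : (3 / 2 - ε) * ((myI C).opt : ℝ) ≤ (3 / 2 - ε) * (2 * (C : ℝ) + 1) :=
      mul_le_mul_of_nonneg_left hopt hs.le
    have hexp : (3 / 2 - ε) * (2 * (C : ℝ) + 1) = 3 * (C : ℝ) + 3 / 2 - ε * (2 * (C : ℝ) + 1) := by
      ring
    have hnn : (0 : ℝ) ≤ ε * ((C : ℝ) + 1) := mul_nonneg hε.le (by linarith)
    have hid : ε * (2 * (C : ℝ) + 1) = ε * (C : ℝ) + ε * ((C : ℝ) + 1) := by ring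
    linarith
end

section
/- For every number of routers k ≥ 2, the competitive ratio of Greedy on instances all of whose packets have length 1 or 2 is at least 2 − 1/2^{k−1} (for any tie-breaking rule): for every ε > 0 and every constant b, there exists an instance I on k routers, all of whose packets have length 1 or 2, such that Greedy(I) > (2 − 1/2^{k−1} − ε)·Opt(I) + b. -/
/-!
Fix `M ≥ 2` and put `F = 2^(k-1) M`. Stage `i ∈ {1, …, k}` starts at router `i`: at time `τ i`
it releases `numShort i` packets of length 1 (`numShort i = 2^(k-1-i) M` for `i < k`,
`numShort k = F`) and at time `τ i + 2` it releases `numLong i = F - numShort i` packets of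
length 2, where `τ (i+1) = τ i + numLong i + 1`. Offline, each stage is served within `F + 2`
steps, long packets first, so `Opt ≤ F + 2`.

Greedy prefers the older short packets of stage `i`, and the long packets of stage `i - 1` arriving
at router `i`, to the long packets of stage `i`. By induction on `i`, the long packets of stage `i`
are not forwarded before `τ i + numLong i`: if one were forwarded at an earlier time `u`, counting
the steps of router `i` in `[τ i, u)` shows that some long packet of stage `i - 1` still waits at
router `i - 1` at time `u`; then router `i - 1` is busy throughout `[τ (i-1) + 2, u)`, which needs
more packets than there are. So the `F` short packets of stage `k` and the `F - M` long packets of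
stage `k - 1` all pass router `k` from time `τ k` on, and one of them has flow time at least
`2F - M`. As `M → ∞`, `(2F - M) / (F + 2)` tends to `2 - 1/2^(k-1)`.
-/

namespace PInstance

variable {k : ℕ} {I : PInstance k} {S : Sched I}

theorem Feasible.hop_lt (hS : Feasible I S) {p : Fin I.n} {j j' : ℕ} (hjj' : j < j')
    (hj' : j' < I.len p) : S p j < S p j' := by
  induction hjj' with
  | refl => exact hS.1 p (j + 1) hj'
  | step _ ih => exact (ih (by omega)).trans (hS.1 _ _ hj')

theorem Feasible.hop_le (hS : Feasible I S) {p : Fin I.n} {j j' : ℕ} (hjj' : j ≤ j')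
    (hj' : j' < I.len p) : S p j ≤ S p j' :=
  hjj'.eq_or_lt.elim (fun h => h ▸ le_rfl) fun h => (hS.hop_lt h hj').le

theorem Feasible.rel_le (hS : Feasible I S) {p : Fin I.n} (hp : 0 < I.len p) : I.rel p ≤ S p 0 :=
  hS.1 p 0 hp

theorem Feasible.waiting_self (hS : Feasible I S) {p : Fin I.n} {j : ℕ} (hj : j < I.len p) :
    Waiting I S p j (S p j) :=
  ⟨hj, hS.1 p j hj, le_rfl⟩

theorem Feasible.remLen_eq (hS : Feasible I S) {p : Fin I.n} {j t : ℕ}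
    (hw : Waiting I S p j t) : remLen I S p t = I.len p - j := by
  obtain ⟨hj, harr, hdep⟩ := hw
  have hpending : {j' | j' < I.len p ∧ t ≤ S p j'} = Set.Ico j (I.len p) := by
    ext j'
    refine ⟨fun ⟨hj'len, _⟩ => ⟨?_, hj'len⟩, fun ⟨hjj', hj'len⟩ => ⟨hj'len, ?_⟩⟩
    · by_contra! hj'j
      obtain ⟨j₀, rfl⟩ : ∃ j₀, j = j₀ + 1 := ⟨j - 1, by omega⟩
      have := hS.hop_le (Nat.le_of_lt_succ hj'j) (by omega : j₀ < I.len p)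
      simp only [arr] at harr
      omega
    · exact hdep.trans (hS.hop_le hjj' hj'len)
  rw [remLen, hpending, ← Finset.coe_Ico, Set.ncard_coe_finset, Nat.card_Ico]

theorem Feasible.prio_eq (hS : Feasible I S) {p : Fin I.n} {j t : ℕ}
    (hw : Waiting I S p j t) : prio I S p t = (t - I.rel p) + (I.len p - j) := by
  rw [prio, hS.remLen_eq hw]

theorem IsGreedy.zealous (hS : IsGreedy I S) : Zealous I S := fun t i hbusy =>
  let ⟨q, jq, hw, hi, ht, _⟩ := hS.2 t i hbusy
  ⟨q, jq, hw, hi, ht⟩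

theorem IsGreedy.prio_le (hS : IsGreedy I S) {p q : Fin I.n} {j jq t : ℕ}
    (hq : Waiting I S q jq t) (hqt : S q jq = t) (hp : Waiting I S p j t)
    (hpq : I.start p + j = I.start q + jq) : prio I S p t ≤ prio I S q t := by
  obtain ⟨q', jq', hq', hi', hq't, hmax⟩ := hS.2 t _ ⟨q, jq, hq, rfl⟩
  obtain rfl : q' = q := hS.1.2 q' q jq' jq hq'.1 hq.1 hi' (hq't.trans hqt.symm)
  exact hmax p j hp hpq

theorem Feasible.card_le_of_forwarded (hS : Feasible I S) {T : Finset (Fin I.n)}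
    {hop : Fin I.n → ℕ} {i a b : ℕ}
    (hT : ∀ p ∈ T,
      hop p < I.len p ∧ I.start p + hop p = i ∧ S p (hop p) ∈ Finset.Ico a b) :
    T.card ≤ b - a := by
  rw [← Nat.card_Ico]
  refine Finset.card_le_card_of_injOn (fun p => S p (hop p)) (fun p hp => (hT p hp).2.2) ?_
  intro p hp q hq hpq
  exact hS.2 p q _ _ (hT p hp).1 (hT q hq).1 ((hT p hp).2.1.trans (hT q hq).2.1.symm) hpq

theorem Feasible.exists_add_card_le_comp (hS : Feasible I S) {T : Finset (Fin I.n)}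
    (hne : T.Nonempty) {i a : ℕ}
    (hT : ∀ p ∈ T, I.start p + (I.len p - 1) = i ∧ a ≤ S p (I.len p - 1))
    (hlen : ∀ p ∈ T, 1 ≤ I.len p) :
    ∃ p ∈ T, a + T.card ≤ comp I S p := by
  by_contra! hlate
  have := hS.card_le_of_forwarded (hop := fun p => I.len p - 1) (a := a) (b := a + T.card - 1)
    fun p hp => ⟨by have := hlen p hp; omega, (hT p hp).1,
      Finset.mem_Ico.mpr ⟨(hT p hp).2, by
        have := hlate p hp
        simp only [comp] at this
        omega⟩⟩
  have := hne.card_pos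
  omega

theorem Zealous.le_card_of_busy (hS : Zealous I S) {T : Finset (Fin I.n)} {i a b : ℕ}
    (hbusy : ∀ t ∈ Finset.Ico a b, ∃ p j, Waiting I S p j t ∧ I.start p + j = i)
    (hT : ∀ p j, j < I.len p → I.start p + j = i → S p j ∈ Finset.Ico a b → p ∈ T) :
    b - a ≤ T.card := by
  have hcover : Finset.Ico a b ⊆ T.image fun p => S p (i - I.start p) := by
    intro t ht
    obtain ⟨q, jq, hw, hi, hqt⟩ := hS t i (hbusy t ht)
    refine Finset.mem_image.mpr ⟨q, hT q jq hw.1 hi (hqt ▸ ht), ?_⟩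
    rw [← hi, Nat.add_sub_cancel_left, hqt]
  simpa using (Finset.card_le_card hcover).trans Finset.card_image_le

theorem opt_le_cost (hS : Feasible I S) : opt I ≤ cost I S :=
  Nat.sInf_le ⟨S, hS, rfl⟩

end PInstance

theorem sub_mul_add_lt_of_le {c ε b x y F : ℝ} (hε : 0 < ε) (hc : c ≤ 2) (hx : 0 ≤ x)
    (hxF : x ≤ F + 2) (hy : c * F ≤ y) (hby : b < y) (hF : b + 4 < ε * F) :
    (c - ε) * x + b < y := by
  rcases le_or_gt (c - ε) 0 with hneg | hpos
  · nlinarith [mul_nonpos_of_nonpos_of_nonneg hneg hx]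
  · nlinarith [mul_le_mul_of_nonneg_left hxF hpos.le]

namespace GreedyLowerBound

open Finset PInstance

variable {k M : ℕ}

variable (k M) in
def scale : ℕ := 2 ^ (k - 1) * M

variable (k M) in
def numShort (i : ℕ) : ℕ := if i < k then 2 ^ (k - 1 - i) * M else scale k M

variable (k M) in
def numLong (i : ℕ) : ℕ := scale k M - numShort k M i

variable (k M) in
def releaseTime (i : ℕ) : ℕ := ∑ j ∈ range i, (numLong k M j + 1)

theorem le_scale : M ≤ scale k M :=
  Nat.le_mul_of_pos_left M (by positivity)

theorem numShort_le_scale (i : ℕ) : numShort k M i ≤ scale k M := by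
  unfold numShort scale
  split_ifs
  · exact Nat.mul_le_mul_right M (Nat.pow_le_pow_right two_pos (by omega))
  · rfl

theorem le_numShort (i : ℕ) : M ≤ numShort k M i := by
  unfold numShort scale
  split_ifs
  · exact Nat.le_mul_of_pos_left M (by positivity)
  · exact le_scale

theorem numShort_add_numLong (i : ℕ) : numShort k M i + numLong k M i = scale k M :=
  Nat.add_sub_of_le (numShort_le_scale i)

theorem numLong_zero : numLong k M 0 = 0 := by
  unfold numLong numShort
  split_ifs <;> simp [scale]

theorem numLong_succ {i : ℕ} (hi : i + 1 < k) :
    numLong k M (i + 1) = numLong k M i + numShort k M (i + 1) := by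
  have hdouble : 2 ^ (k - 1 - i) * M = 2 * (2 ^ (k - 1 - (i + 1)) * M) := by
    rw [show k - 1 - i = k - 1 - (i + 1) + 1 by omega, pow_succ]
    ring
  have hle := numShort_le_scale (k := k) (M := M) i
  rw [numShort, if_pos (by omega)] at hle
  rw [numLong, numLong, numShort, numShort, if_pos hi, if_pos (by omega)]
  omega

theorem numLong_pred_last (hk : 1 ≤ k) : numLong k M (k - 1) = scale k M - M := by
  simp [numLong, numShort, show k - 1 < k by omega]

theorem releaseTime_succ (i : ℕ) :
    releaseTime k M (i + 1) = releaseTime k M i + numLong k M i + 1 :=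
  sum_range_succ _ _

/-- Packets are indexed by pairs `(stage - 1, offset)` through `finProdFinEquiv`; stages are
numbered from `1`, like the routers they start at. -/
def stage (v : Fin (k * scale k M)) : ℕ := (finProdFinEquiv.symm v).1 + 1

def offset (v : Fin (k * scale k M)) : ℕ := (finProdFinEquiv.symm v).2

def IsShort (v : Fin (k * scale k M)) : Prop := offset v < numShort k M (stage v)

instance : DecidablePred (IsShort (k := k) (M := M)) := fun _ => Nat.decLt _ _

-- reducible, so that instance search identifies `Fin (inst k M).n` with `Fin (k * scale k M)`
variable (k M) in
abbrev inst : PInstance k where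
  n := k * scale k M
  rel v := releaseTime k M (stage v) + if IsShort v then 0 else 2
  start v := stage v
  len v := if IsShort v then 1 else 2

variable (k M) in
def shortPkts (i : ℕ) : Finset (Fin (k * scale k M)) := {v | stage v = i ∧ IsShort v}

variable (k M) in
def longPkts (i : ℕ) : Finset (Fin (k * scale k M)) := {v | stage v = i ∧ ¬ IsShort v}

theorem one_le_stage (v : Fin (k * scale k M)) : 1 ≤ stage v := by simp [stage]

theorem stage_le (v : Fin (k * scale k M)) : stage v ≤ k := (finProdFinEquiv.symm v).1.2

theorem offset_lt (v : Fin (k * scale k M)) : offset v < scale k M := (finProdFinEquiv.symm v).2.2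

theorem eq_of_stage_eq_of_offset_eq {v w : Fin (k * scale k M)} (hs : stage v = stage w)
    (ho : offset v = offset w) : v = w :=
  finProdFinEquiv.symm.injective (Prod.ext (Fin.ext (by simpa [stage] using hs)) (Fin.ext ho))

theorem card_filter_stage_eq {i : ℕ} (hi : 1 ≤ i) (hik : i ≤ k) (P : ℕ → Prop)
    [DecidablePred P] :
    #{v : Fin (k * scale k M) | stage v = i ∧ P (offset v)} = #{r : Fin (scale k M) | P r} := by
  refine card_nbij' (fun v => (finProdFinEquiv.symm v).2)
    (fun r => finProdFinEquiv (⟨i - 1, by omega⟩, r)) ?_ ?_ ?_ ?_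
  · intro v hv
    simp_all [offset]
  · intro r hr
    rw [mem_coe, mem_filter] at hr ⊢
    simp only [stage, offset, Equiv.symm_apply_apply]
    exact ⟨mem_univ _, by omega, hr.2⟩
  · intro v hv
    rw [mem_coe, mem_filter] at hv
    rw [← Equiv.eq_symm_apply]
    refine Prod.ext (Fin.ext ?_) rfl
    simp only [stage] at hv
    show i - 1 = _
    omega
  · intro r _
    simp

theorem mem_shortPkts {i : ℕ} {v : Fin (k * scale k M)} :
    v ∈ shortPkts k M i ↔ stage v = i ∧ IsShort v := by
  simp [shortPkts]

theorem mem_longPkts {i : ℕ} {v : Fin (k * scale k M)} :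
    v ∈ longPkts k M i ↔ stage v = i ∧ ¬ IsShort v := by
  simp [longPkts]

theorem card_shortPkts {i : ℕ} (hi : 1 ≤ i) (hik : i ≤ k) :
    #(shortPkts k M i) = numShort k M i := by
  have hfilter : shortPkts k M i = univ.filter fun v => stage v = i ∧ offset v < numShort k M i :=
    filter_congr fun v _ => by rw [IsShort]; exact ⟨fun h => h.1 ▸ h, fun h => h.1 ▸ h⟩
  rw [hfilter, card_filter_stage_eq hi hik (· < numShort k M i), Fin.card_filter_val_lt]
  exact min_eq_right (numShort_le_scale i)

theorem card_longPkts {i : ℕ} (hik : i < k) : #(longPkts k M i) = numLong k M i := by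
  rcases Nat.eq_zero_or_pos i with rfl | hi
  · rw [numLong_zero, card_eq_zero, eq_empty_iff_forall_notMem]
    intro v hv
    have := one_le_stage v
    have := (mem_longPkts.mp hv).1
    omega
  have hfilter :
      longPkts k M i = univ.filter fun v => stage v = i ∧ ¬ offset v < numShort k M i :=
    filter_congr fun v _ => by rw [IsShort]; exact ⟨fun h => h.1 ▸ h, fun h => h.1 ▸ h⟩
  have hsplit := card_filter_add_card_filter_not (s := univ) fun r : Fin (scale k M) =>
    (r : ℕ) < numShort k M i
  rw [Fin.card_filter_val_lt, card_univ, Fintype.card_fin,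
    min_eq_right (numShort_le_scale i)] at hsplit
  rw [hfilter, card_filter_stage_eq hi hik.le (¬ · < numShort k M i), numLong]
  omega

theorem stage_lt_of_not_isShort {v : Fin (k * scale k M)} (hv : ¬ IsShort v) : stage v < k := by
  refine (stage_le v).lt_of_ne fun hk => hv ?_
  rw [IsShort, hk, numShort, if_neg (lt_irrefl k)]
  exact offset_lt v

theorem lt_of_mem_longPkts {i : ℕ} {v : Fin (k * scale k M)} (hv : v ∈ longPkts k M i) :
    i < k :=
  (mem_longPkts.mp hv).1 ▸ stage_lt_of_not_isShort (mem_longPkts.mp hv).2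

theorem numLong_pos_of_mem_longPkts {i : ℕ} {v : Fin (k * scale k M)}
    (hv : v ∈ longPkts k M i) :
    0 < numLong k M i := by
  obtain ⟨rfl, hlong⟩ := mem_longPkts.mp hv
  have := numShort_add_numLong (k := k) (M := M) (stage v)
  have := offset_lt v
  rw [IsShort] at hlong
  omega

theorem inst_start (v : Fin (inst k M).n) : (inst k M).start v = stage v := rfl

theorem inst_len (v : Fin (inst k M).n) : (inst k M).len v = if IsShort v then 1 else 2 := rfl

section Fields

variable {i : ℕ} {v : Fin (inst k M).n}

theorem start_eq_of_mem_shortPkts (hv : v ∈ shortPkts k M i) : (inst k M).start v = i :=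
  (mem_shortPkts.mp hv).1

theorem len_eq_of_mem_shortPkts (hv : v ∈ shortPkts k M i) : (inst k M).len v = 1 :=
  if_pos (mem_shortPkts.mp hv).2

theorem rel_eq_of_mem_shortPkts (hv : v ∈ shortPkts k M i) :
    (inst k M).rel v = releaseTime k M i := by
  obtain ⟨hs, hshort⟩ := mem_shortPkts.mp hv
  simp [hs, hshort]

theorem start_eq_of_mem_longPkts (hv : v ∈ longPkts k M i) : (inst k M).start v = i :=
  (mem_longPkts.mp hv).1

theorem len_eq_of_mem_longPkts (hv : v ∈ longPkts k M i) : (inst k M).len v = 2 :=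
  if_neg (mem_longPkts.mp hv).2

theorem rel_eq_of_mem_longPkts (hv : v ∈ longPkts k M i) :
    (inst k M).rel v = releaseTime k M i + 2 := by
  obtain ⟨hs, hlong⟩ := mem_longPkts.mp hv
  simp [hs, hlong]

theorem mem_shortPkts_or_mem_longPkts (v : Fin (inst k M).n) :
    v ∈ shortPkts k M (stage v) ∨ v ∈ longPkts k M (stage v) := by
  by_cases h : IsShort v
  · exact .inl (mem_shortPkts.mpr ⟨rfl, h⟩)
  · exact .inr (mem_longPkts.mpr ⟨rfl, h⟩)

end Fields

theorem inst_valid : (inst k M).Valid := fun v => by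
  rw [inst_start, inst_len]
  refine ⟨one_le_stage v, by split_ifs <;> omega, ?_⟩
  split_ifs with h
  · have := stage_le v
    omega
  · have := stage_lt_of_not_isShort h
    omega

theorem inst_len_pos (v : Fin (inst k M).n) : 0 < (inst k M).len v :=
  (inst_valid v).2.1

theorem inst_short : (inst k M).Short := fun v => by
  rw [inst_len]
  split_ifs <;> simp

/-- Position of packet `v` in the order in which the offline schedule serves its stage:
long packets first, then short ones. -/
def slot (v : Fin (k * scale k M)) : ℕ :=
  if IsShort v then numLong k M (stage v) + offset v else offset v - numShort k M (stage v)

variable (k M) in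
def optSched : Sched (inst k M) := fun v j => releaseTime k M (stage v) + 2 + slot v + j

theorem slot_lt_numLong {v : Fin (k * scale k M)} (hv : ¬ IsShort v) :
    slot v < numLong k M (stage v) := by
  have := numShort_add_numLong (k := k) (M := M) (stage v)
  have := offset_lt v
  rw [slot, if_neg hv]
  rw [IsShort] at hv
  omega

theorem slot_lt_scale (v : Fin (k * scale k M)) : slot v < scale k M := by
  have := numShort_add_numLong (k := k) (M := M) (stage v)
  by_cases hv : IsShort v
  · rw [slot, if_pos hv]
    rw [IsShort] at hv
    omega
  · exact (slot_lt_numLong hv).trans_le (by omega)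

theorem eq_of_stage_eq_of_slot_eq {v w : Fin (k * scale k M)} (hs : stage v = stage w)
    (hslot : slot v = slot w) : v = w := by
  refine eq_of_stage_eq_of_offset_eq hs ?_
  have := numShort_add_numLong (k := k) (M := M) (stage w)
  have := offset_lt v
  have := offset_lt w
  unfold slot at hslot
  split_ifs at hslot with hv hw hw <;> unfold IsShort at hv hw <;> rw [hs] at hv hslot <;> omega

theorem optSched_feasible : Feasible (inst k M) (optSched k M) := by
  refine ⟨fun v j hj => ?_, fun p q jp jq hjp hjq hrouter htime => ?_⟩
  · rcases j with _ | _ | j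
    · simp only [arr, optSched]
      split_ifs <;> omega
    · exact le_rfl
    · rw [inst_len] at hj
      split_ifs at hj <;> omega
  · simp only [optSched] at htime
    rw [inst_start, inst_start] at hrouter
    rw [inst_len] at hjp hjq
    wlog hpq : stage p ≤ stage q generalizing p q jp jq
    · exact (this q p jq jp hjq hjp hrouter.symm htime.symm (by omega)).symm
    rcases hpq.eq_or_lt with hs | hs
    · obtain rfl : jp = jq := by omega
      exact eq_of_stage_eq_of_slot_eq hs (by rw [hs] at htime; omega)
    · -- `p` makes its second hop, at router `stage q`, before stage `q` is served there
      have hp : ¬ IsShort p := fun h => by rw [if_pos h] at hjp; omega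
      rw [if_neg hp] at hjp
      have hq : stage q = stage p + 1 := by omega
      have := slot_lt_numLong hp
      rw [hq, releaseTime_succ] at htime
      omega

theorem cost_optSched_le : cost (inst k M) (optSched k M) ≤ scale k M + 2 := by
  refine Finset.sup_le fun v _ => ?_
  have := slot_lt_scale v
  simp only [flowTime, comp, optSched]
  split_ifs <;> omega

theorem opt_inst_le : (inst k M).opt ≤ scale k M + 2 :=
  (opt_le_cost optSched_feasible).trans cost_optSched_le

section Greedy

variable {S : Sched (inst k M)} {i : ℕ} {q : Fin (inst k M).n}

theorem first_hop_lt_second_hop (hS : Feasible (inst k M) S) {v : Fin (inst k M).n}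
    (hv : v ∈ longPkts k M i) : S v 0 < S v 1 :=
  hS.hop_lt zero_lt_one (by rw [len_eq_of_mem_longPkts hv]; omega)

theorem first_hop_lt_of_mem_shortPkts (hS : IsGreedy (inst k M) S)
    (hq : q ∈ longPkts k M i) {r : Fin (inst k M).n} (hr : r ∈ shortPkts k M i) :
    S r 0 < S q 0 := by
  by_contra! hpending
  have hrelq := hS.1.rel_le (inst_len_pos q)
  rw [rel_eq_of_mem_longPkts hq] at hrelq
  have hwq := hS.1.waiting_self (inst_len_pos q)
  have hwr : Waiting (inst k M) S r 0 (S q 0) :=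
    ⟨inst_len_pos r, by rw [arr, rel_eq_of_mem_shortPkts hr]; omega, hpending⟩
  have := hS.prio_le hwq rfl hwr
    (by rw [start_eq_of_mem_shortPkts hr, start_eq_of_mem_longPkts hq])
  rw [hS.1.prio_eq hwq, hS.1.prio_eq hwr, len_eq_of_mem_longPkts hq, len_eq_of_mem_shortPkts hr,
    rel_eq_of_mem_longPkts hq, rel_eq_of_mem_shortPkts hr] at this
  omega

theorem second_hop_lt_of_first_hop_lt (hS : IsGreedy (inst k M) S) (hq : q ∈ longPkts k M (i + 1))
    {w : Fin (inst k M).n} (hw : w ∈ longPkts k M i) (hw0 : S w 0 < S q 0) : S w 1 < S q 0 := by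
  by_contra! hpending
  have hrelq := hS.1.rel_le (inst_len_pos q)
  rw [rel_eq_of_mem_longPkts hq, releaseTime_succ] at hrelq
  have hwq := hS.1.waiting_self (inst_len_pos q)
  have hww : Waiting (inst k M) S w 1 (S q 0) :=
    ⟨by rw [len_eq_of_mem_longPkts hw]; omega, hw0, hpending⟩
  have := hS.prio_le hwq rfl hww
    (by rw [start_eq_of_mem_longPkts hw, start_eq_of_mem_longPkts hq])
  rw [hS.1.prio_eq hwq, hS.1.prio_eq hww, len_eq_of_mem_longPkts hq, len_eq_of_mem_longPkts hw,
    rel_eq_of_mem_longPkts hq, rel_eq_of_mem_longPkts hw, releaseTime_succ] at this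
  have := numLong_pos_of_mem_longPkts hw
  omega

theorem numShort_add_card_le (hS : IsGreedy (inst k M) S)
    (hprev : ∀ w ∈ longPkts k M i, releaseTime k M i + numLong k M i ≤ S w 0)
    (hq : q ∈ longPkts k M (i + 1)) :
    numShort k M (i + 1) + #{w ∈ longPkts k M i | S w 1 < S q 0} ≤
      S q 0 - releaseTime k M (i + 1) := by
  have hdisj : Disjoint (shortPkts k M (i + 1)) {w ∈ longPkts k M i | S w 1 < S q 0} :=
    disjoint_left.mpr fun v hs hl => by
      have := (mem_shortPkts.mp hs).1
      have := (mem_longPkts.mp (mem_filter.mp hl).1).1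
      omega
  rw [← card_shortPkts (by omega) (lt_of_mem_longPkts hq).le, ← card_union_of_disjoint hdisj]
  refine hS.1.card_le_of_forwarded (hop := fun v => (inst k M).len v - 1) (i := i + 1)
    fun v hv => ?_
  rcases mem_union.mp hv with hv | hv
  · rw [len_eq_of_mem_shortPkts hv, start_eq_of_mem_shortPkts hv, mem_Ico]
    have := hS.1.rel_le (inst_len_pos v)
    rw [rel_eq_of_mem_shortPkts hv] at this
    exact ⟨by omega, rfl, this, first_hop_lt_of_mem_shortPkts hS hq hv⟩
  · obtain ⟨hv, hv1⟩ := mem_filter.mp hv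
    rw [len_eq_of_mem_longPkts hv, start_eq_of_mem_longPkts hv, mem_Ico, releaseTime_succ]
    have := first_hop_lt_second_hop hS.1 hv
    have := hprev v hv
    exact ⟨by omega, rfl, show _ ≤ S v 1 by omega, hv1⟩

theorem sub_le_card_of_first_hop_pending (hS : IsGreedy (inst k M) S)
    (hq : q ∈ longPkts k M (i + 1)) {w₀ : Fin (inst k M).n} (hw₀ : w₀ ∈ longPkts k M i)
    (hpending : S q 0 ≤ S w₀ 0) :
    S q 0 - (releaseTime k M i + 2) ≤
      numLong k M i + #{w ∈ longPkts k M i | S w 1 < S q 0} := by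
  have hi : 1 ≤ i := (mem_longPkts.mp hw₀).1 ▸ one_le_stage w₀
  have hik := lt_of_mem_longPkts hw₀
  have hbusy := hS.zealous.le_card_of_busy (i := i) (a := releaseTime k M i + 2) (b := S q 0)
    (T := shortPkts k M i ∪ longPkts k M (i - 1) ∪ {w ∈ longPkts k M i | S w 1 < S q 0})
    (fun t ht => ⟨w₀, 0, ⟨inst_len_pos w₀, by
      rw [arr, rel_eq_of_mem_longPkts hw₀]; exact (mem_Ico.mp ht).1,
      (mem_Ico.mp ht).2.le.trans hpending⟩, start_eq_of_mem_longPkts hw₀⟩)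
    fun v j hj hrouter ht => by
      rcases mem_shortPkts_or_mem_longPkts v with hv | hv
      · rw [len_eq_of_mem_shortPkts hv] at hj
        rw [start_eq_of_mem_shortPkts hv] at hrouter
        obtain rfl : j = 0 := by omega
        exact mem_union_left _ (mem_union_left _ (by rwa [← hrouter]))
      · rw [len_eq_of_mem_longPkts hv] at hj
        rw [start_eq_of_mem_longPkts hv] at hrouter
        rcases (by omega : j = 0 ∨ j = 1) with rfl | rfl
        · rw [add_zero] at hrouter
          subst hrouter
          exact mem_union_right _ (mem_filter.mpr
            ⟨hv, second_hop_lt_of_first_hop_lt hS (by omega) hv (mem_Ico.mp ht).2⟩)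
        · exact mem_union_left _ (mem_union_right _ (by rwa [← hrouter]))
  refine hbusy.trans ((card_union_le _ _).trans (Nat.add_le_add_right
    ((card_union_le _ _).trans_eq ?_) _))
  have hrec := numLong_succ (k := k) (M := M) (i := i - 1) (by omega)
  rw [Nat.sub_add_cancel hi] at hrec
  rw [card_shortPkts hi hik.le, card_longPkts (by omega), hrec, add_comm]

theorem first_hop_late_succ (hM : 2 ≤ M) (hS : IsGreedy (inst k M) S)
    (hprev : ∀ w ∈ longPkts k M i, releaseTime k M i + numLong k M i ≤ S w 0)
    (hq : q ∈ longPkts k M (i + 1)) :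
    releaseTime k M (i + 1) + numLong k M (i + 1) ≤ S q 0 := by
  by_contra! hearly
  have hik := lt_of_mem_longPkts hq
  have hcount := numShort_add_card_le hS hprev hq
  have := le_numShort (k := k) (M := M) (i + 1)
  obtain ⟨w₀, hw₀, hpending⟩ : ∃ w₀ ∈ longPkts k M i, S q 0 ≤ S w₀ 0 := by
    by_contra! hall
    rw [filter_true_of_mem fun w hw => second_hop_lt_of_first_hop_lt hS hq hw (hall w hw),
      card_longPkts (by omega)] at hcount
    rw [numLong_succ hik] at hearly
    omega
  have hbusy := sub_le_card_of_first_hop_pending hS hq hw₀ hpending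
  have hrelq := hS.1.rel_le (inst_len_pos q)
  rw [rel_eq_of_mem_longPkts hq] at hrelq
  rw [releaseTime_succ] at hcount hrelq
  omega

theorem first_hop_late (hM : 2 ≤ M) (hS : IsGreedy (inst k M) S) :
    ∀ i, ∀ q ∈ longPkts k M i, releaseTime k M i + numLong k M i ≤ S q 0
  | 0, q, hq => absurd (mem_longPkts.mp hq).1 (Nat.one_le_iff_ne_zero.mp (one_le_stage q))
  | i + 1, _, hq => first_hop_late_succ hM hS (first_hop_late hM hS i) hq

theorem two_mul_scale_sub_le_cost (hk : 1 ≤ k) (hM : 2 ≤ M) (hS : IsGreedy (inst k M) S) :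
    2 * scale k M - M ≤ cost (inst k M) S := by
  have hdisj : Disjoint (shortPkts k M k) (longPkts k M (k - 1)) :=
    disjoint_left.mpr fun v hs hl => by
      have := (mem_shortPkts.mp hs).1
      have := (mem_longPkts.mp hl).1
      omega
  have hMF : M ≤ scale k M := le_scale
  have hcard : #(shortPkts k M k ∪ longPkts k M (k - 1)) = 2 * scale k M - M := by
    rw [card_union_of_disjoint hdisj, card_shortPkts hk le_rfl, card_longPkts (by omega),
      numLong_pred_last hk, numShort, if_neg (lt_irrefl k)]
    omega
  have hτ := releaseTime_succ (k := k) (M := M) (k - 1)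
  rw [Nat.sub_add_cancel hk] at hτ
  have hrouter : ∀ p ∈ shortPkts k M k ∪ longPkts k M (k - 1),
      (inst k M).start p + ((inst k M).len p - 1) = k ∧
        releaseTime k M k ≤ S p ((inst k M).len p - 1) ∧
        (inst k M).rel p ≤ releaseTime k M k := by
    intro p hp
    rcases mem_union.mp hp with hp | hp
    · rw [start_eq_of_mem_shortPkts hp, len_eq_of_mem_shortPkts hp]
      have := hS.1.rel_le (inst_len_pos p)
      rw [rel_eq_of_mem_shortPkts hp] at this ⊢
      exact ⟨rfl, this, le_rfl⟩
    · rw [start_eq_of_mem_longPkts hp, len_eq_of_mem_longPkts hp, rel_eq_of_mem_longPkts hp]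
      have := first_hop_lt_second_hop hS.1 hp
      have := first_hop_late hM hS (k - 1) p hp
      have := numLong_pos_of_mem_longPkts hp
      exact ⟨by omega, show _ ≤ S p 1 by omega, by omega⟩
  obtain ⟨p, hp, hlate⟩ := hS.1.exists_add_card_le_comp
    (card_pos.mp (by omega)) (fun p hp => ⟨(hrouter p hp).1, (hrouter p hp).2.1⟩)
    (fun p _ => inst_len_pos p)
  calc 2 * scale k M - M ≤ flowTime (inst k M) S p := by
        rw [flowTime]
        have := (hrouter p hp).2.2
        omega
    _ ≤ cost (inst k M) S := le_sup (mem_univ p)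

end Greedy

theorem two_sub_mul_scale (k M : ℕ) :
    (2 - 1 / 2 ^ (k - 1) : ℝ) * scale k M = 2 * scale k M - M := by
  rw [scale]
  push_cast
  field_simp

theorem sub_mul_opt_add_lt_cost (hk : 1 ≤ k) (hM : 2 ≤ M) {ε b : ℝ} (hε : 0 < ε)
    (hbM : b < M) (hbεM : b + 4 < ε * M) {S : Sched (inst k M)} (hS : IsGreedy (inst k M) S) :
    (2 - 1 / 2 ^ (k - 1) - ε) * ((inst k M).opt : ℝ) + b < (inst k M).cost S := by
  have hMF : (M : ℝ) ≤ scale k M := by exact_mod_cast le_scale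
  have hopt : ((inst k M).opt : ℝ) ≤ scale k M + 2 := by exact_mod_cast opt_inst_le
  have hcost := Nat.cast_le (α := ℝ) |>.mpr (two_mul_scale_sub_le_cost hk hM hS)
  rw [Nat.cast_sub ((le_scale (k := k)).trans (by omega)), Nat.cast_mul, Nat.cast_ofNat] at hcost
  exact sub_mul_add_lt_of_le hε (sub_le_self 2 (by positivity)) (Nat.cast_nonneg _) hopt
    ((two_sub_mul_scale k M).trans_le hcost) (by linarith)
    (hbεM.trans_le (mul_le_mul_of_nonneg_left hMF hε.le))

end GreedyLowerBound

/-- For every number of routers `k ≥ 2`, the competitive ratio of Greedy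
on instances all of whose packets have length `1` or `2` is at least `2 − 1/2^{k−1}`, for
any tie-breaking rule: for every `ε > 0` and every constant `b`, there exists an instance
`I` on `k` routers with all packet lengths in `{1, 2}` such that every schedule Greedy can
produce on `I` has cost greater than `(2 − 1/2^{k−1} − ε)·Opt(I) + b`. -/
theorem greedy_lower_bound (k : ℕ) (hk : 2 ≤ k) (ε : ℝ) (hε : 0 < ε) (b : ℝ) :
    ∃ I : PInstance k, I.Valid ∧ I.Short ∧
      ∀ S : PInstance.Sched I, I.IsGreedy S →
        (2 - 1 / 2 ^ (k - 1) - ε) * (I.opt : ℝ) + b < (I.cost S : ℝ) := by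
  obtain ⟨m, hm⟩ := exists_nat_gt (max ((b + 4) / ε) b)
  have hmM : (m : ℝ) ≤ max 2 m := by exact_mod_cast le_max_right 2 m
  refine ⟨GreedyLowerBound.inst k (max 2 m), GreedyLowerBound.inst_valid,
    GreedyLowerBound.inst_short, fun S hS => ?_⟩
  refine GreedyLowerBound.sub_mul_opt_add_lt_cost (by omega) (le_max_left 2 m) hε ?_ ?_ hS
  · exact (le_max_right _ b).trans_lt (hm.trans_le hmM)
  · have := (le_max_left _ b).trans_lt (hm.trans_le hmM)
    rwa [div_lt_iff₀ hε, mul_comm] at this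
end

section
/- For every instance I in which all packets have length 1 or 2, every zealous optimal schedule Opt, every tie-breaking rule for Greedy, and every time t ≥ 0, Δ_1(t) = 0. -/
/-- `Δ_i(t) = g_i(t) − a_i(t)`, where `g_i(t)` counts the packets (released by time `t`)
that Greedy's schedule `Sg` still needs to forward on router `i` at time `t`, and
`a_i(t)` is the analogous quantity for the schedule `So` of `Opt`. -/
noncomputable def delta {k : ℕ} (I : PInstance k) (Sg So : PInstance.Sched I)
    (i t : ℕ) : ℤ :=
  (I.needs Sg i t : ℤ) - (I.needs So i t : ℤ)

/-!
Router 1 only receives packets at their release, and a zealous feasible schedule forwards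
exactly one packet there whenever its queue is nonempty. Hence the queue length at router 1
obeys `q(t+1) = (q(t) - 1) + (releases at router 1 at time t+1)`, a recursion that does not
depend on the schedule; since Greedy is zealous, Greedy and Opt have equal queues at router 1.
-/

namespace PInstance

variable {k : ℕ} {I : PInstance k}

theorem IsGreedy.zealous_s2 {S : Sched I} (hG : I.IsGreedy S) : I.Zealous S := by
  intro t i hwait
  obtain ⟨q, jq, hq, hqi, hqt, -⟩ := hG.2 t i hwait
  exact ⟨q, jq, hq, hqi, hqt⟩

def firstQueue (I : PInstance k) (S : Sched I) (t : ℕ) : Set (Fin I.n) :=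
  {p | I.start p = 1 ∧ I.rel p ≤ t ∧ t ≤ S p 0}

def releasedAtFirst (I : PInstance k) (t : ℕ) : Set (Fin I.n) :=
  {p | I.start p = 1 ∧ I.rel p = t}

section

variable (hV : I.Valid) (S : Sched I)
include hV

theorem start_eq_one_of_hop_eq_one {p : Fin I.n} {j : ℕ} (h : I.start p + j = 1) :
    I.start p = 1 ∧ j = 0 := by
  have := (hV p).1
  omega

theorem needs_one_eq_ncard_firstQueue (t : ℕ) : I.needs S 1 t = (I.firstQueue S t).ncard := by
  unfold needs firstQueue
  congr 1
  ext p
  constructor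
  · rintro ⟨hr, j, -, hpj, ht⟩
    obtain ⟨hs, rfl⟩ := start_eq_one_of_hop_eq_one hV hpj
    exact ⟨hs, hr, ht⟩
  · rintro ⟨hs, hr, ht⟩
    exact ⟨hr, 0, (hV p).2.1, hs, ht⟩

theorem firstQueue_succ (hF : I.Feasible S) (t : ℕ) :
    I.firstQueue S (t + 1) =
      (I.firstQueue S t \ {p | S p 0 = t}) ∪ I.releasedAtFirst (t + 1) := by
  ext p
  simp only [firstQueue, releasedAtFirst, Set.mem_union, Set.mem_sdiff, Set.mem_ofPred_eq]
  have hrel : I.rel p ≤ S p 0 := hF.1 p 0 (hV p).2.1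
  omega

/-- Feasibility makes the packet forwarded at router 1 unique, zealousness makes it exist. -/
theorem ncard_firstQueue_sdiff_forwarded (hF : I.Feasible S) (hZ : I.Zealous S) (t : ℕ) :
    (I.firstQueue S t \ {p | S p 0 = t}).ncard = (I.firstQueue S t).ncard - 1 := by
  rcases (I.firstQueue S t).eq_empty_or_nonempty with hempty | ⟨p, hs, hr, ht⟩
  · simp [hempty]
  obtain ⟨q, jq, ⟨hjq, harr, hqt⟩, hqi, hSq⟩ :=
    hZ t 1 ⟨p, 0, ⟨(hV p).2.1, hr, ht⟩, hs⟩
  obtain ⟨hqs, rfl⟩ := start_eq_one_of_hop_eq_one hV hqi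
  have hq : q ∈ I.firstQueue S t := ⟨hqs, harr, hqt⟩
  have hforwarded : I.firstQueue S t \ {p | S p 0 = t} = I.firstQueue S t \ {q} := by
    ext p'
    simp only [Set.mem_sdiff, Set.mem_ofPred_eq, Set.mem_singleton_iff]
    refine and_congr_right fun hp' => ⟨fun hne heq => hne (heq ▸ hSq), fun hne ht' => hne ?_⟩
    exact hF.2 p' q 0 0 (hV p').2.1 hjq (by rw [hp'.1, hqs]) (ht'.trans hSq.symm)
  rw [hforwarded, Set.ncard_sdiff_singleton_of_mem hq]

theorem ncard_firstQueue_succ (hF : I.Feasible S) (hZ : I.Zealous S) (t : ℕ) :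
    (I.firstQueue S (t + 1)).ncard =
      (I.firstQueue S t).ncard - 1 + (I.releasedAtFirst (t + 1)).ncard := by
  have hdisj : Disjoint (I.firstQueue S t \ {p | S p 0 = t}) (I.releasedAtFirst (t + 1)) :=
    Set.disjoint_left.mpr fun _ ⟨⟨_, hr, _⟩, _⟩ ⟨_, hr'⟩ => by omega
  rw [firstQueue_succ hV S hF, Set.ncard_union_eq hdisj,
    ncard_firstQueue_sdiff_forwarded hV S hF hZ]

end

theorem ncard_firstQueue_eq_of_zealous (hV : I.Valid) {S₁ S₂ : Sched I}
    (hF₁ : I.Feasible S₁) (hZ₁ : I.Zealous S₁) (hF₂ : I.Feasible S₂) (hZ₂ : I.Zealous S₂)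
    (t : ℕ) : (I.firstQueue S₁ t).ncard = (I.firstQueue S₂ t).ncard := by
  induction t with
  | zero => simp [firstQueue]
  | succ t ih =>
    rw [ncard_firstQueue_succ hV S₁ hF₁ hZ₁, ncard_firstQueue_succ hV S₂ hF₂ hZ₂, ih]

end PInstance

theorem delta_one_eq_zero_general {k : ℕ} (I : PInstance k) (hV : I.Valid)
    (So : PInstance.Sched I) (hOf : I.Feasible So) (hOz : I.Zealous So)
    (Sg : PInstance.Sched I) (hG : I.IsGreedy Sg) (t : ℕ) :
    delta I Sg So 1 t = 0 := by
  have hqueue := I.ncard_firstQueue_eq_of_zealous hV hG.1 hG.zealous_s2 hOf hOz t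
  rw [delta, I.needs_one_eq_ncard_firstQueue hV, I.needs_one_eq_ncard_firstQueue hV, hqueue,
    sub_self]

/-- For every instance in which all packets have length `1` or `2`,
every zealous optimal schedule `So`, every tie-breaking rule for Greedy (i.e. every
schedule `Sg` that Greedy can produce), and every time `t ≥ 0`, we have `Δ_1(t) = 0`. -/
theorem delta_one_eq_zero {k : ℕ} (I : PInstance k) (hV : I.Valid) (hS : I.Short)
    (So : PInstance.Sched I) (hOf : I.Feasible So) (hOz : I.Zealous So)
    (hOopt : I.cost So = I.opt)
    (Sg : PInstance.Sched I) (hG : I.IsGreedy Sg) (t : ℕ) :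
    delta I Sg So 1 t = 0 :=
  delta_one_eq_zero_general I hV So hOf hOz Sg hG t
end

section
/- Let i ≥ 2 be a router and t ≥ 0 a time, for an instance all of whose packets have length 1 or 2. If Δ_i(t+1) = Δ_i(t) + 1 > Δ_{i−1}(t) ≥ 0, then at time t there exist at least Δ_i(t+1) − Δ_{i−1}(t) packets p that still need to be forwarded by router i−1 under the schedule Opt and whose current priority satisfies π(p,t) ≥ Δ_i(t+1) + 1. -/
/-!
Since `Δ_i` grows by one at time `t`, Opt forwards a packet at router `i` in step `t` while
Greedy forwards none; so nothing waits at router `i` under Greedy, and every packet Greedy still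
needs at `i` is a two-hop packet whose first hop is still pending at router `i - 1`. A packet
that Opt still needs at `i - 1` and whose priority is at most `Δ_i(t+1)` was released after
`t - Δ_i(t+1)`, so Greedy cannot have forwarded it at `i - 1` yet: it would have been preferred
to an older two-hop packet that was waiting there. Such a packet exists because Opt forwarded
at router `i`, in distinct recent steps, the packets that Greedy but not Opt still needs there. Hence Greedy's packets at `i - 1` contain those at `i`
and the low-priority ones of Opt, which overlap only in packets Opt still needs at `i` other
than the one it forwards in step `t`; inclusion–exclusion gives the bound.
-/

theorem Set.le_ncard_of_union_sdiff_subset {α : Type*} [Finite α] {A F G X Y Z : Set α}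
    (hGX : G ⊆ X) (hYX : Y \ Z ⊆ X) (hGY : G ∩ Y ⊆ A \ F) (hFA : F ⊆ A) :
    (G.ncard : ℤ) - A.ncard + F.ncard - (X.ncard - Y.ncard) ≤ Z.ncard := by
  have hX := Set.ncard_le_ncard (Set.union_subset hGX hYX)
  have hunion := Set.ncard_union_add_ncard_inter G (Y \ Z)
  have hinter : (G ∩ (Y \ Z)).ncard ≤ (A \ F).ncard :=
    Set.ncard_le_ncard ((Set.inter_subset_inter_right _ Set.sdiff_subset).trans hGY)
  have hAF := Set.ncard_sdiff hFA
  have hFA' := Set.ncard_le_ncard hFA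
  have hYZ := Set.le_ncard_sdiff Z Y
  omega

namespace PInstance

variable {k : ℕ} {I : PInstance k}

def pending (I : PInstance k) (S : Sched I) (r t : ℕ) : Set (Fin I.n) :=
  {p | I.rel p ≤ t ∧ ∃ j, j < I.len p ∧ I.start p + j = r ∧ t ≤ S p j}

def forwardedAt (I : PInstance k) (S : Sched I) (r t : ℕ) : Set (Fin I.n) :=
  {p | ∃ j, j < I.len p ∧ I.start p + j = r ∧ S p j = t}

theorem needs_eq_ncard_pending (S : Sched I) (r t : ℕ) :
    I.needs S r t = (I.pending S r t).ncard := rfl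

theorem Feasible.sched_mono {S : Sched I} (hF : I.Feasible S) {p : Fin I.n} {j j' : ℕ}
    (hjj' : j ≤ j') (hj' : j' < I.len p) : S p j ≤ S p j' := by
  induction j', hjj' using Nat.le_induction with
  | base => exact le_rfl
  | succ m _ ih =>
    have hstep : S p m + 1 ≤ S p (m + 1) := hF.1 p (m + 1) hj'
    have := ih (by omega)
    omega

theorem Feasible.rel_le_sched {S : Sched I} (hF : I.Feasible S) {p : Fin I.n} {j : ℕ}
    (hj : j < I.len p) : I.rel p ≤ S p j :=
  (hF.1 p 0 (by omega)).trans (hF.sched_mono (Nat.zero_le j) hj)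

theorem Feasible.ncard_forwardedAt_le_one {S : Sched I} (hF : I.Feasible S) (r t : ℕ) :
    (I.forwardedAt S r t).ncard ≤ 1 := by
  rw [Set.ncard_le_one_iff]
  rintro p q ⟨j, hj, hjr, hjt⟩ ⟨j', hj', hjr', hjt'⟩
  exact hF.2 p q j j' hj hj' (by omega) (by omega)

theorem Feasible.forwardedAt_subset_pending {S : Sched I} (hF : I.Feasible S) (r t : ℕ) :
    I.forwardedAt S r t ⊆ I.pending S r t := by
  rintro p ⟨j, hj, hjr, rfl⟩
  exact ⟨hF.rel_le_sched hj, j, hj, hjr, le_rfl⟩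

theorem Feasible.pending_succ {S : Sched I} (hF : I.Feasible S) (r t : ℕ) :
    I.pending S r (t + 1) = (I.pending S r t \ I.forwardedAt S r t) ∪
      {p | I.rel p = t + 1 ∧ ∃ j, j < I.len p ∧ I.start p + j = r} := by
  ext p
  constructor
  · rintro ⟨hrel, j, hj, hjr, hjt⟩
    rcases Nat.lt_or_ge (I.rel p) (t + 1) with hlt | hge
    · refine Or.inl ⟨⟨by omega, j, hj, hjr, by omega⟩, ?_⟩
      rintro ⟨j', -, hjr', hjt'⟩
      obtain rfl : j = j' := by omega
      omega
    · exact Or.inr ⟨by omega, j, hj, hjr⟩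
  · rintro (⟨⟨hrel, j, hj, hjr, hjt⟩, hnot⟩ | ⟨hrel, j, hj, hjr⟩)
    · refine ⟨by omega, j, hj, hjr, Nat.lt_of_le_of_ne hjt fun h => hnot ?_⟩
      exact ⟨j, hj, hjr, h.symm⟩
    · exact ⟨hrel.le, j, hj, hjr, hrel ▸ hF.rel_le_sched hj⟩

theorem Feasible.needs_succ_add {S : Sched I} (hF : I.Feasible S) (r t : ℕ) :
    I.needs S r (t + 1) + (I.forwardedAt S r t).ncard = I.needs S r t +
      {p : Fin I.n | I.rel p = t + 1 ∧ ∃ j, j < I.len p ∧ I.start p + j = r}.ncard := by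
  have hsub := hF.forwardedAt_subset_pending r t
  have hdisj : Disjoint (I.pending S r t \ I.forwardedAt S r t)
      {p | I.rel p = t + 1 ∧ ∃ j, j < I.len p ∧ I.start p + j = r} := by
    rw [Set.disjoint_left]
    rintro p ⟨⟨hrel, -⟩, -⟩ ⟨hrel', -⟩
    omega
  rw [needs_eq_ncard_pending, needs_eq_ncard_pending, hF.pending_succ, Set.ncard_union_eq hdisj,
    Set.ncard_sdiff hsub]
  have := Set.ncard_le_ncard hsub
  omega

theorem delta_succ {Sg So : Sched I} (hGf : I.Feasible Sg) (hOf : I.Feasible So) (r t : ℕ) :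
    delta I Sg So r (t + 1) = delta I Sg So r t + (I.forwardedAt So r t).ncard -
      (I.forwardedAt Sg r t).ncard := by
  have hG := hGf.needs_succ_add r t
  have hO := hOf.needs_succ_add r t
  unfold delta
  omega

theorem remLen_le_len (S : Sched I) (p : Fin I.n) (t : ℕ) : I.remLen S p t ≤ I.len p :=
  (Set.ncard_le_ncard fun _ hj => hj.1).trans (Set.ncard_Iio_nat _).le

theorem remLen_pos {S : Sched I} {p : Fin I.n} {j t : ℕ} (hj : j < I.len p) (ht : t ≤ S p j) :
    0 < I.remLen S p t :=
  (Set.ncard_pos ((Set.finite_Iio (I.len p)).subset fun _ hj => hj.1)).2 ⟨j, hj, ht⟩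

theorem Feasible.remLen_eq_len {S : Sched I} (hF : I.Feasible S) {p : Fin I.n} {t : ℕ}
    (ht : t ≤ S p 0) : I.remLen S p t = I.len p := by
  have hset : {j | j < I.len p ∧ t ≤ S p j} = Set.Iio (I.len p) :=
    Set.ext fun j => ⟨And.left, fun hj => ⟨hj, ht.trans (hF.sched_mono (Nat.zero_le j) hj)⟩⟩
  rw [remLen, hset, Set.ncard_Iio_nat]

theorem Feasible.forwardedAt_of_delta_succ {Sg So : Sched I} (hGf : I.Feasible Sg)
    (hOf : I.Feasible So) {r t : ℕ} (h : delta I Sg So r (t + 1) = delta I Sg So r t + 1) :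
    I.forwardedAt Sg r t = ∅ ∧ (I.forwardedAt So r t).ncard = 1 := by
  have hstep := delta_succ hGf hOf r t
  have hG := hGf.ncard_forwardedAt_le_one r t
  have hO := hOf.ncard_forwardedAt_le_one r t
  exact ⟨(Set.ncard_eq_zero (Set.toFinite _)).1 (by omega), by omega⟩

theorem IsGreedy.not_waiting_of_forwardedAt_eq_empty {S : Sched I} (hG : I.IsGreedy S)
    {r t : ℕ} (h : I.forwardedAt S r t = ∅) (p : Fin I.n) (j : ℕ) (hw : I.Waiting S p j t) :
    I.start p + j ≠ r := by
  rintro rfl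
  obtain ⟨q, jq, hwq, hqr, hqt, -⟩ := hG.2 t _ ⟨p, j, hw, rfl⟩
  have hq : q ∈ I.forwardedAt S (I.start p + j) t := ⟨jq, hwq.1, hqr, hqt⟩
  rw [h] at hq
  exact hq

theorem two_hop_of_mem_pending {S : Sched I} (hS : I.Short) {r t : ℕ}
    (hidle : ∀ p j, I.Waiting S p j t → I.start p + j ≠ r) {p : Fin I.n}
    (hp : p ∈ I.pending S r t) : I.len p = 2 ∧ I.start p + 1 = r ∧ t ≤ S p 0 := by
  obtain ⟨hrel, j, hj, hjr, hjt⟩ := hp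
  have hj0 : j ≠ 0 := by
    rintro rfl
    exact hidle p 0 ⟨hj, hrel, hjt⟩ hjr
  have hlen : I.len p = 2 := by rcases hS p with h | h <;> omega
  obtain rfl : j = 1 := by omega
  refine ⟨hlen, hjr, le_of_not_gt fun h0 => hidle p 1 ⟨hj, h0, hjt⟩ hjr⟩

/-- At time `τ = S p j` the waiting packet `q` still has both hops ahead, so its priority is
`τ - rel q + 2`, while that of `p` is at most `τ - rel p + 2`. -/
theorem IsGreedy.rel_le_of_waiting {S : Sched I} (hG : I.IsGreedy S) (hS : I.Short)
    {p q : Fin I.n} {j : ℕ} (hj : j < I.len p) (hq : I.len q = 2)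
    (hqr : I.start q = I.start p + j) (hqrel : I.rel q ≤ S p j) (hqt : S p j ≤ S q 0) :
    I.rel p ≤ I.rel q := by
  set τ := S p j
  have hwq : I.Waiting S q 0 τ := ⟨by omega, hqrel, hqt⟩
  obtain ⟨p', j', hwp', hp'r, hp't, hmax⟩ := hG.2 τ (I.start p + j) ⟨q, 0, hwq, hqr⟩
  obtain rfl : p = p' := hG.1.2 p p' j j' hj hwp'.1 hp'r.symm hp't.symm
  have hprio : I.prio S q τ ≤ I.prio S p τ := hmax q 0 hwq hqr
  have hremq : I.remLen S q τ = 2 := hq ▸ hG.1.remLen_eq_len hqt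
  have hremp : I.remLen S p τ ≤ 2 := (remLen_le_len S p τ).trans (by rcases hS p with h | h <;> omega)
  have hrelp : I.rel p ≤ τ := hG.1.rel_le_sched hj
  unfold prio at hprio
  omega

/-- Otherwise the at least `m` packets that `S` still needs at `r` but `So` does not were
forwarded at `r` by `So` in distinct steps of `[t + 1 - m, t)`, which has only `m - 1` elements. -/
theorem Feasible.exists_mem_pending_rel_add_lt {S So : Sched I} (hOf : I.Feasible So)
    {r t m : ℕ} (htwo : ∀ p ∈ I.pending S r t, I.len p = 2 ∧ I.start p + 1 = r)
    (hm : I.needs So r t + m ≤ I.needs S r t) (hm1 : 1 ≤ m) :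
    ∃ q ∈ I.pending S r t, I.rel q + m < t := by
  by_contra! hnew
  set D := I.pending S r t \ I.pending So r t
  have hmaps : ∀ q ∈ D, So q 1 ∈ Set.Ico (t + 1 - m) t := by
    rintro q ⟨hqS, hqO⟩
    obtain ⟨hlen, hstart⟩ := htwo q hqS
    have hlt : So q 1 < t := lt_of_not_ge fun h => hqO ⟨hqS.1, 1, by omega, hstart, h⟩
    have harr : So q 0 + 1 ≤ So q 1 := hOf.1 q 1 (by omega)
    have hrel := hOf.rel_le_sched (p := q) (j := 0) (by omega)
    have := hnew q hqS
    exact ⟨by omega, hlt⟩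
  have hinj : Set.InjOn (fun q => So q 1) D := by
    intro q hq q' hq' h
    obtain ⟨hlen, hstart⟩ := htwo q hq.1
    obtain ⟨hlen', hstart'⟩ := htwo q' hq'.1
    exact hOf.2 q q' 1 1 (by omega) (by omega) (by omega) h
  have hD := Set.ncard_le_ncard_of_injOn _ hmaps hinj
  have hcover : (I.pending S r t).ncard ≤ D.ncard + (I.pending So r t).ncard :=
    Set.ncard_le_ncard_sdiff_add_ncard _ _
  rw [Set.ncard_Ico_nat] at hD
  rw [needs_eq_ncard_pending, needs_eq_ncard_pending] at hm
  omega

/-- A packet that `So` still needs at `r` with priority at most `m + 1` was released after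
`t - m`; had Greedy already forwarded it at `r`, it would have done so while an older two-hop
packet was waiting there. -/
theorem IsGreedy.mem_pending_of_prio_le {Sg So : Sched I} (hG : I.IsGreedy Sg) (hS : I.Short)
    {p : Fin I.n} {r t m : ℕ} (hp : p ∈ I.pending So r t) (hprio : I.prio So p t ≤ m + 1)
    (hold : 1 ≤ m → ∃ q, I.len q = 2 ∧ I.start q = r ∧ t ≤ Sg q 0 ∧ I.rel q + m < t) :
    p ∈ I.pending Sg r t := by
  obtain ⟨hrel, j, hj, hjr, hjt⟩ := hp
  refine ⟨hrel, j, hj, hjr, le_of_not_gt fun hforw => ?_⟩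
  have hrem := remLen_pos hj hjt
  have hrelτ := hG.1.rel_le_sched hj
  unfold prio at hprio
  obtain ⟨q, hq, hqr, hqt, hqrel⟩ := hold (by omega)
  have := hG.rel_le_of_waiting hS hj hq (hqr.trans hjr.symm) (by omega) (by omega)
  omega

theorem Feasible.mem_pending_sdiff_forwardedAt {S : Sched I} (hF : I.Feasible S)
    {p : Fin I.n} {r t : ℕ} (hlen : I.len p = 2) (hr : I.start p + 1 = r)
    (hp : p ∈ I.pending S (r - 1) t) : p ∈ I.pending S r t \ I.forwardedAt S r t := by
  obtain ⟨hrel, j, hj, hjr, hjt⟩ := hp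
  obtain rfl : j = 0 := by omega
  have harr : S p 0 + 1 ≤ S p 1 := hF.1 p 1 (by omega)
  refine ⟨⟨hrel, 1, by omega, hr, by omega⟩, ?_⟩
  rintro ⟨j', hj', hj'r, hj't⟩
  obtain rfl : j' = 1 := by omega
  omega

end PInstance

open PInstance in
theorem opt_pending_high_priority_general {k : ℕ} (I : PInstance k) (hS : I.Short)
    (So : PInstance.Sched I) (hOf : I.Feasible So)
    (Sg : PInstance.Sched I) (hG : I.IsGreedy Sg) (i t : ℕ)
    (h1 : delta I Sg So i (t + 1) = delta I Sg So i t + 1)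
    (h2 : delta I Sg So (i - 1) t < delta I Sg So i (t + 1))
    (h3 : 0 ≤ delta I Sg So (i - 1) t) :
    delta I Sg So i (t + 1) - delta I Sg So (i - 1) t ≤
      (Set.ncard {p : Fin I.n | I.rel p ≤ t ∧
        (∃ j, j < I.len p ∧ I.start p + j = i - 1 ∧ t ≤ So p j) ∧
        delta I Sg So i (t + 1) + 1 ≤ (I.prio So p t : ℤ)} : ℤ) := by
  obtain ⟨hGidle, hOfwd⟩ := hG.1.forwardedAt_of_delta_succ hOf h1
  have htwo := fun p (hp : p ∈ I.pending Sg i t) =>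
    two_hop_of_mem_pending hS (hG.not_waiting_of_forwardedAt_eq_empty hGidle) hp
  simp only [delta, needs_eq_ncard_pending] at *
  obtain ⟨m, hm⟩ : ∃ m, (I.pending So i t).ncard + m = (I.pending Sg i t).ncard :=
    ⟨_, Nat.add_sub_of_le (by omega)⟩
  refine le_trans ?_ (Set.le_ncard_of_union_sdiff_subset (A := I.pending So i t)
    (F := I.forwardedAt So i t) (G := I.pending Sg i t) (X := I.pending Sg (i - 1) t)
    (Y := I.pending So (i - 1) t) ?_ ?_ ?_ (hOf.forwardedAt_subset_pending i t))
  · omega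
  · intro p hp
    obtain ⟨hlen, hstart, hpt⟩ := htwo p hp
    exact ⟨hp.1, 0, by omega, by omega, hpt⟩
  · rintro p ⟨hp, hlow⟩
    refine hG.mem_pending_of_prio_le hS hp (m := m) ?_ fun hm1 => ?_
    · by_contra! hprio
      exact hlow ⟨hp.1, hp.2, by omega⟩
    · obtain ⟨q, hq, hqrel⟩ := hOf.exists_mem_pending_rel_add_lt
        (fun p hp => (htwo p hp).imp_right And.left) hm.le hm1
      obtain ⟨hlen, hstart, hqt⟩ := htwo q hq
      exact ⟨q, hlen, by omega, hqt, hqrel⟩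
  · rintro p ⟨hp, hpY⟩
    obtain ⟨hlen, hstart, -⟩ := htwo p hp
    exact hOf.mem_pending_sdiff_forwardedAt hlen hstart hpY

/-- Let `i ≥ 2` be a router and `t ≥ 0` a time, for an instance all of
whose packets have length `1` or `2` (with a zealous optimal schedule `So` and a Greedy
schedule `Sg`).  If `Δ_i(t+1) = Δ_i(t) + 1 > Δ_{i−1}(t) ≥ 0`, then at time `t` there exist
at least `Δ_i(t+1) − Δ_{i−1}(t)` packets `p` that still need to be forwarded by router
`i − 1` under the schedule `So` of `Opt` and whose current priority satisfies
`π(p,t) ≥ Δ_i(t+1) + 1`. -/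
theorem opt_pending_high_priority {k : ℕ} (I : PInstance k) (hV : I.Valid) (hS : I.Short)
    (So : PInstance.Sched I) (hOf : I.Feasible So) (hOz : I.Zealous So)
    (hOopt : I.cost So = I.opt)
    (Sg : PInstance.Sched I) (hG : I.IsGreedy Sg) (i t : ℕ) (hi : 2 ≤ i)
    (h1 : delta I Sg So i (t + 1) = delta I Sg So i t + 1)
    (h2 : delta I Sg So (i - 1) t < delta I Sg So i (t + 1))
    (h3 : 0 ≤ delta I Sg So (i - 1) t) :
    delta I Sg So i (t + 1) - delta I Sg So (i - 1) t ≤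
      (Set.ncard {p : Fin I.n | I.rel p ≤ t ∧
        (∃ j, j < I.len p ∧ I.start p + j = i - 1 ∧ t ≤ So p j) ∧
        delta I Sg So i (t + 1) + 1 ≤ (I.prio So p t : ℤ)} : ℤ) :=
  opt_pending_high_priority_general I hS So hOf Sg hG i t h1 h2 h3
end

section
/- For all integers k ≥ 2 and h ≥ 2, there exists a feasible schedule for the instance I_k^h whose maximum flow time is at most 2^{k−1}·h + 3; consequently, Opt(I_k^h) ≤ 2^{k−1}·h + 3. -/
/-- Build an instance from a list of packets, each given as a triple
(release time, start router, length). -/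
def ofTriples (k : ℕ) (L : List (ℕ × ℕ × ℕ)) : PInstance k where
  n := L.length
  rel p := (L.get p).1
  start p := (L.get p).2.1
  len p := (L.get p).2.2

/-- The size `|B_j| = (2^{k−1} − 2^{k−1−j})·h` of block `B_j` of the instance `I_k^h`. -/
def sizeB (k h j : ℕ) : ℕ := (2 ^ (k - 1) - 2 ^ (k - 1 - j)) * h

/-- The release-time offset `r_i = (Σ_{j=1}^{i-1} |B_j|) + max {0, i − 2}`. -/
def rIdx (k h i : ℕ) : ℕ := (∑ j ∈ Finset.Icc 1 (i - 1), sizeB k h j) + (i - 2)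

/-- Block `A_i` (for `1 ≤ i ≤ k − 1`): `2^{k−1−i}·h` packets released at time `r_i` at
router `max {1, i−1}`, of length `1` if `i = 1` and of length `2` if `i ≥ 2`. -/
def blockA (k h i : ℕ) : List (ℕ × ℕ × ℕ) :=
  List.replicate (2 ^ (k - 1 - i) * h) (rIdx k h i, max 1 (i - 1), if i = 1 then 1 else 2)

/-- Block `B_i` (for `1 ≤ i ≤ k − 1`): `(2^{k−1} − 2^{k−1−i})·h` packets of length `2`
released at time `r_i + 2` at router `i`. -/
def blockB (k h i : ℕ) : List (ℕ × ℕ × ℕ) :=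
  List.replicate (sizeB k h i) (rIdx k h i + 2, i, 2)

/-- Block `B_k`: `2^{k−1}·h` packets of length `1` released at time `r_k + 2` at router `k`. -/
def blockBk (k h : ℕ) : List (ℕ × ℕ × ℕ) :=
  List.replicate (2 ^ (k - 1) * h) (rIdx k h k + 2, k, 1)

/-- The lower-bound instance `I_k^h`: it consists of the blocks `A_i` and `B_i` for
`1 ≤ i ≤ k − 1`, together with the block `B_k`. -/
def Ikh (k h : ℕ) : PInstance k :=
  ofTriples k
    ((((List.range (k - 1)).map (· + 1)).flatMap fun i => blockA k h i ++ blockB k h i)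
      ++ blockBk k h)

/-!
The bound is witnessed by an explicit schedule. Number the packets of `I_k^h` in `k` blocks of
`N = 2^{k-1}·h`: block `i < k` is `A_i` followed by `B_i`, block `k` is `B_k`. Put
`epoch 1 = 1` and `epoch (i+1) = epoch i + |B_i| + 1`, so that `epoch i = r_i + 2` for `i ≥ 2`.
Router `m` forwards
* the second hops of `B_{m-1}` up to time `epoch m`,
* the first hops of `B_m` during `(epoch m, epoch (m+1))`,
* the last hops of `A_m` during `[epoch (m+1), epoch (m+1) + |A_m|)`,
* then the first hops of `A_{m+1}`,

so the router and the time step determine the packet, and no router forwards two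
packets at once. Packets of `B_i` have flow time at most `3`; the packet of `A_i` at position
`w < |A_i|` completes at `epoch (i+1) + w + 1 ≤ r_i + |B_i| + |A_i| + 3`, and its first hop, at
time `epoch i + |A_{i-1}| + w`, comes before its last one because `|A_{i-1}| + |A_i| ≤ N`.
-/

namespace PInstance

variable {k : ℕ} {I : PInstance k} {S : Sched I}

theorem Feasible.of_decode {α : Type*} (havail : ∀ p j, j < I.len p → arr I S p j ≤ S p j)
    (code : Fin I.n → α) (hcode : Function.Injective code) (decode : ℕ → ℕ → α)
    (hdecode : ∀ p j, j < I.len p → decode (I.start p + j) (S p j) = code p) :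
    Feasible I S := by
  refine ⟨havail, fun p q jp jq hjp hjq hrouter htime => hcode ?_⟩
  rw [← hdecode p jp hjp, ← hdecode q jq hjq, hrouter, htime]

theorem cost_le_of_comp_le {c : ℕ} (h : ∀ p, comp I S p ≤ I.rel p + c) : cost I S ≤ c :=
  Finset.sup_le fun p _ => Nat.sub_le_iff_le_add'.mpr (h p)

end PInstance

theorem List.getElem?_flatten_of_forall_length_eq {α : Type*} {N : ℕ} {L : List (List α)}
    (hL : ∀ l ∈ L, l.length = N) (v : ℕ) : L.flatten[v]? = L[v / N]?.bind (·[v % N]?) := by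
  rcases Nat.eq_zero_or_pos N with rfl | hN
  · have hnil : ∀ l ∈ L, l = [] := fun l hl => List.length_eq_zero_iff.mp (hL l hl)
    rw [List.flatten_eq_nil_iff.mpr hnil]
    cases h : L[v / 0]? with
    | none => simp
    | some l => simp [hnil l (List.mem_of_getElem? h)]
  induction L generalizing v with
  | nil => simp
  | cons l L ih =>
    have hl : l.length = N := hL l (by simp)
    rcases lt_or_ge v N with hv | hv
    · simp [List.getElem?_append_left (hl ▸ hv), Nat.div_eq_of_lt hv, Nat.mod_eq_of_lt hv]
    · obtain ⟨u, rfl⟩ := Nat.exists_eq_add_of_le hv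
      rw [List.flatten_cons, List.getElem?_append_right (by omega), hl, Nat.add_sub_cancel_left,
        ih (fun l' hl' => hL l' (by simp [hl'])) u, Nat.add_div_left _ hN, Nat.add_mod_left]
      simp

namespace Ikh

section Timeline

variable (k h : ℕ)

/-- `|A_i|`, extended by an empty block `A_k`, so that `B_k` needs no special treatment. -/
def sizeA (i : ℕ) : ℕ := if i < k then 2 ^ (k - 1 - i) * h else 0

def epoch (i : ℕ) : ℕ := ∑ j ∈ Finset.range i, (2 ^ (k - 1) * h - sizeA k h j + 1)

/-- The packet at position `w` of block `i`, as a triple (release time, start router, length). -/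
def packet (i w : ℕ) : ℕ × ℕ × ℕ :=
  if w < sizeA k h i then (rIdx k h i, max 1 (i - 1), if i = 1 then 1 else 2)
  else (rIdx k h i + 2, i, if i = k then 1 else 2)

def sched (i w j : ℕ) : ℕ :=
  if w < sizeA k h i then
    if 2 ≤ i ∧ j = 0 then epoch k h i + sizeA k h (i - 1) + w else epoch k h (i + 1) + w
  else epoch k h i + 1 + (w - sizeA k h i) + j

/-- The packet, as (block, position), that router `m` forwards at time `t`. -/
def decode (m t : ℕ) : ℕ × ℕ :=
  if 2 ≤ m ∧ t ≤ epoch k h m then (m - 1, sizeA k h (m - 1) + (t - epoch k h (m - 1) - 2))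
  else if t < epoch k h (m + 1) then (m, sizeA k h m + (t - epoch k h m - 1))
  else if t < epoch k h (m + 1) + sizeA k h m then (m, t - epoch k h (m + 1))
  else (m + 1, t - epoch k h (m + 1) - sizeA k h m)

variable {k h}

theorem sizeA_le (i : ℕ) : sizeA k h i ≤ 2 ^ (k - 1) * h := by
  unfold sizeA
  split_ifs
  · exact Nat.mul_le_mul_right _ (Nat.pow_le_pow_right two_pos (Nat.sub_le _ _))
  · exact Nat.zero_le _

theorem sizeA_zero (hk : 0 < k) : sizeA k h 0 = 2 ^ (k - 1) * h := by
  simp [sizeA, hk]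

theorem sizeA_pred_add_sizeA_le {i : ℕ} (hi : 2 ≤ i) :
    sizeA k h (i - 1) + sizeA k h i ≤ 2 ^ (k - 1) * h := by
  by_cases hik : i < k
  · have hpred : 2 ^ (k - 1 - (i - 1)) = 2 * 2 ^ (k - 1 - i) := by
      rw [show k - 1 - (i - 1) = k - 1 - i + 1 by omega, pow_succ, mul_comm]
    have hsplit : 2 ^ (k - 1) = 2 ^ (k - 1 - i) * 2 ^ i := by
      rw [← pow_add, Nat.sub_add_cancel (by omega)]
    have hfour : 4 ≤ 2 ^ i := Nat.pow_le_pow_right two_pos hi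
    simp only [sizeA, if_pos hik, if_pos (show i - 1 < k by omega), hpred, hsplit]
    nlinarith [Nat.zero_le (2 ^ (k - 1 - i) * h)]
  · simp only [sizeA, if_neg hik, add_zero]
    exact sizeA_le _

theorem epoch_succ (i : ℕ) :
    epoch k h (i + 1) = epoch k h i + (2 ^ (k - 1) * h - sizeA k h i) + 1 :=
  Finset.sum_range_succ _ _

theorem epoch_one (hk : 0 < k) : epoch k h 1 = 1 := by
  simp [epoch, sizeA_zero hk]

theorem rIdx_one : rIdx k h 1 = 0 := by
  simp [rIdx]

theorem rIdx_succ {i : ℕ} (hi : 2 ≤ i) :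
    rIdx k h (i + 1) = rIdx k h i + sizeB k h i + 1 := by
  unfold rIdx
  rw [show i + 1 - 1 = i - 1 + 1 by omega, Finset.sum_Icc_succ_top (by omega),
    show i - 1 + 1 = i by omega]
  omega

theorem sizeB_eq {i : ℕ} (hi : i < k) : sizeB k h i = 2 ^ (k - 1) * h - sizeA k h i := by
  simp [sizeB, sizeA, hi, Nat.sub_mul]

theorem rIdx_add_two {i : ℕ} (hi : 2 ≤ i) (hik : i ≤ k) : rIdx k h i + 2 = epoch k h i := by
  induction i, hi using Nat.le_induction with
  | base =>
    have hr : rIdx k h 2 = sizeB k h 1 := by simp [rIdx]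
    have he : epoch k h 2 = epoch k h 1 + (2 ^ (k - 1) * h - sizeA k h 1) + 1 := epoch_succ 1
    rw [hr, he, epoch_one (by omega), sizeB_eq (by omega)]
    omega
  | succ i hi ih =>
    rw [rIdx_succ hi, epoch_succ, ← ih (by omega), sizeB_eq (by omega)]
    omega

end Timeline

section Packet

variable {k h i w : ℕ}

theorem packet_len_le_two : (packet k h i w).2.2 ≤ 2 := by
  unfold packet
  split_ifs <;> simp

theorem packet_rel_le_sched (hi : 1 ≤ i) (hik : i ≤ k) :
    (packet k h i w).1 ≤ sched k h i w 0 := by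
  have hR : rIdx k h i + 1 ≤ epoch k h i := by
    rcases Nat.lt_or_ge i 2 with hi1 | hi2
    · rw [show i = 1 by omega, rIdx_one, epoch_one (by omega)]
    · have := rIdx_add_two (h := h) hi2 hik; omega
  unfold packet sched
  split_ifs <;> simp only [epoch_succ] <;> omega

theorem sched_zero_lt_sched_one (hi : 1 ≤ i) (hlen : (packet k h i w).2.2 = 2) :
    sched k h i w 0 < sched k h i w 1 := by
  have hA := sizeA_pred_add_sizeA_le (k := k) (h := h) (i := i)
  have hA' := sizeA_le (k := k) (h := h) i
  simp only [packet, sched, epoch_succ] at *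
  generalize 2 ^ (k - 1) * h = N at *
  split_ifs at hlen ⊢ <;> simp only [and_true, and_false] at * <;> omega

theorem sched_last_add_one_le (hk : 0 < k) (hi : 1 ≤ i) (hik : i ≤ k)
    (hw : w < 2 ^ (k - 1) * h) :
    sched k h i w ((packet k h i w).2.2 - 1) + 1
      ≤ (packet k h i w).1 + (2 ^ (k - 1) * h + 3) := by
  have hA := sizeA_le (k := k) (h := h) i
  have hR : i = 1 ∧ rIdx k h i = 0 ∧ epoch k h i = 1 ∨
      2 ≤ i ∧ rIdx k h i + 2 = epoch k h i := by
    rcases Nat.lt_or_ge i 2 with hi1 | hi2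
    · obtain rfl : i = 1 := by omega
      exact .inl ⟨rfl, rIdx_one, epoch_one hk⟩
    · exact .inr ⟨hi2, rIdx_add_two hi2 hik⟩
  simp only [packet, sched, epoch_succ] at *
  generalize 2 ^ (k - 1) * h = N at *
  split_ifs <;> simp only [and_true] at * <;> omega

theorem decode_blockB_hop_zero (hwA : sizeA k h i ≤ w) (hw : w < 2 ^ (k - 1) * h) :
    decode k h i (epoch k h i + 1 + (w - sizeA k h i)) = (i, w) := by
  simp only [decode, epoch_succ]
  generalize 2 ^ (k - 1) * h = N at *
  split_ifs <;> simp only [Prod.mk.injEq, true_and] <;> omega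

theorem decode_blockB_hop_one (hi : 1 ≤ i) (hwA : sizeA k h i ≤ w)
    (hw : w < 2 ^ (k - 1) * h) :
    decode k h (i + 1) (epoch k h i + 1 + (w - sizeA k h i) + 1) = (i, w) := by
  simp only [decode, epoch_succ, Nat.add_sub_cancel]
  generalize 2 ^ (k - 1) * h = N at *
  split_ifs <;> simp only [Prod.mk.injEq, true_and] <;> omega

theorem decode_blockA_last_hop (hwA : w < sizeA k h i) :
    decode k h i (epoch k h (i + 1) + w) = (i, w) := by
  have := sizeA_le (k := k) (h := h) i
  simp only [decode, epoch_succ]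
  generalize 2 ^ (k - 1) * h = N at *
  split_ifs <;> simp only [Prod.mk.injEq, true_and] <;> omega

theorem decode_blockA_first_hop :
    decode k h i (epoch k h (i + 1) + sizeA k h i + w) = (i + 1, w) := by
  have := sizeA_le (k := k) (h := h) i
  simp only [decode, epoch_succ]
  generalize 2 ^ (k - 1) * h = N at *
  split_ifs <;> simp only [Prod.mk.injEq, true_and] <;> omega

theorem decode_sched {j : ℕ} (hi : 1 ≤ i) (hw : w < 2 ^ (k - 1) * h)
    (hj : j < (packet k h i w).2.2) :
    decode k h ((packet k h i w).2.1 + j) (sched k h i w j) = (i, w) := by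
  by_cases hwA : w < sizeA k h i
  · simp only [packet, sched, if_pos hwA] at hj ⊢
    rcases Nat.lt_or_ge i 2 with hi1 | hi2
    · obtain rfl : i = 1 := by omega
      obtain rfl : j = 0 := by simpa using hj
      simpa using decode_blockA_last_hop hwA
    · obtain ⟨m, rfl⟩ : ∃ m, i = m + 1 := ⟨i - 1, by omega⟩
      have hj2 : j < 2 := by simpa [show m ≠ 0 by omega] using hj
      interval_cases j
      · simpa [show 1 ≤ m by omega] using decode_blockA_first_hop (k := k) (h := h) (w := w)
      · simpa [show 1 ≤ m by omega] using decode_blockA_last_hop hwA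
  · simp only [packet, sched, if_neg hwA] at hj ⊢
    have hj2 : j < 2 := by split_ifs at hj <;> omega
    interval_cases j
    · simpa using decode_blockB_hop_zero (not_lt.mp hwA) hw
    · simpa using decode_blockB_hop_one hi (not_lt.mp hwA) hw

end Packet

section Blocks

variable {k h i w : ℕ}

theorem length_blockA_add_length_blockB (hi : i < k) :
    (blockA k h i).length + (blockB k h i).length = 2 ^ (k - 1) * h := by
  have := sizeA_le (k := k) (h := h) i
  simp only [blockA, blockB, List.length_replicate, sizeB_eq hi]
  simp only [sizeA, if_pos hi] at *
  omega

theorem getElem?_blockA_append_blockB (hi : i < k) (hw : w < 2 ^ (k - 1) * h) :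
    (blockA k h i ++ blockB k h i)[w]? = some (packet k h i w) := by
  have := length_blockA_add_length_blockB (h := h) hi
  simp only [blockA, blockB, List.length_replicate] at this
  simp only [blockA, blockB, packet, sizeA, if_pos hi, List.getElem?_append,
    List.length_replicate, List.getElem?_replicate]
  split_ifs <;> first | rfl | omega

theorem getElem?_blockBk (hw : w < 2 ^ (k - 1) * h) :
    (blockBk k h)[w]? = some (packet k h k w) := by
  simp [blockBk, packet, sizeA, hw]

variable (k h) in
def blocks : List (List (ℕ × ℕ × ℕ)) :=
  ((List.range (k - 1)).map (· + 1)).map (fun i => blockA k h i ++ blockB k h i) ++ [blockBk k h]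

theorem length_of_mem_blocks {l : List (ℕ × ℕ × ℕ)} (hl : l ∈ blocks k h) :
    l.length = 2 ^ (k - 1) * h := by
  simp only [blocks, List.mem_append, List.mem_map, List.mem_range, List.mem_singleton] at hl
  rcases hl with ⟨_, ⟨i, hi, rfl⟩, rfl⟩ | rfl
  · rw [List.length_append, length_blockA_add_length_blockB (by omega)]
  · simp [blockBk]

theorem getElem?_blocks_bind (hk : 0 < k) (hi : i < k) (hw : w < 2 ^ (k - 1) * h) :
    (blocks k h)[i]?.bind (·[w]?) = some (packet k h (i + 1) w) := by
  rcases Nat.lt_or_ge i (k - 1) with hi' | hi'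
  · rw [blocks, List.getElem?_append_left (by simpa using hi')]
    simp [hi', getElem?_blockA_append_blockB (show i + 1 < k by omega) hw]
  · obtain rfl : i = k - 1 := by omega
    simp [blocks, List.getElem?_append_right, Nat.sub_add_cancel hk, getElem?_blockBk hw]

theorem flatten_blocks : (blocks k h).flatten =
    (((List.range (k - 1)).map (· + 1)).flatMap fun i => blockA k h i ++ blockB k h i)
      ++ blockBk k h := by
  simp [blocks, List.flatMap]

end Blocks

section Instance

variable {k h : ℕ}

theorem n_eq (hk : 0 < k) : (Ikh k h).n = k * (2 ^ (k - 1) * h) := by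
  have hlen : (blocks k h).map List.length = List.replicate k (2 ^ (k - 1) * h) := by
    refine List.eq_replicate_iff.mpr ⟨?_, ?_⟩
    · simp [blocks, Nat.sub_add_cancel hk]
    · simpa using fun l hl => length_of_mem_blocks hl
  rw [show (Ikh k h).n = (blocks k h).flatten.length by rw [flatten_blocks]; rfl,
    List.length_flatten, hlen, List.sum_replicate, smul_eq_mul]

theorem index_lt (hk : 0 < k) (p : Fin (Ikh k h).n) :
    p.val / (2 ^ (k - 1) * h) < k ∧ p.val % (2 ^ (k - 1) * h) < 2 ^ (k - 1) * h := by
  have hp : p.val < k * (2 ^ (k - 1) * h) := n_eq hk ▸ p.isLt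
  have hN : 0 < 2 ^ (k - 1) * h := Nat.pos_of_ne_zero (by rintro h0; simp [h0] at hp)
  exact ⟨Nat.div_lt_of_lt_mul (by rwa [mul_comm] at hp), Nat.mod_lt _ hN⟩

theorem packet_eq (hk : 0 < k) (p : Fin (Ikh k h).n) :
    ((Ikh k h).rel p, (Ikh k h).start p, (Ikh k h).len p)
      = packet k h (p.val / (2 ^ (k - 1) * h) + 1) (p.val % (2 ^ (k - 1) * h)) := by
  obtain ⟨hi, hw⟩ := index_lt hk p
  apply Option.some_injective
  rw [← getElem?_blocks_bind hk hi hw,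
    ← List.getElem?_flatten_of_forall_length_eq (fun l hl => length_of_mem_blocks hl),
    flatten_blocks]
  exact (List.getElem?_eq_getElem p.isLt).symm

theorem rel_eq (hk : 0 < k) (p : Fin (Ikh k h).n) :
    (Ikh k h).rel p
      = (packet k h (p.val / (2 ^ (k - 1) * h) + 1) (p.val % (2 ^ (k - 1) * h))).1 :=
  congrArg Prod.fst (packet_eq hk p)

theorem start_eq (hk : 0 < k) (p : Fin (Ikh k h).n) :
    (Ikh k h).start p
      = (packet k h (p.val / (2 ^ (k - 1) * h) + 1) (p.val % (2 ^ (k - 1) * h))).2.1 :=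
  congrArg (·.2.1) (packet_eq hk p)

theorem len_eq (hk : 0 < k) (p : Fin (Ikh k h).n) :
    (Ikh k h).len p
      = (packet k h (p.val / (2 ^ (k - 1) * h) + 1) (p.val % (2 ^ (k - 1) * h))).2.2 :=
  congrArg (·.2.2) (packet_eq hk p)

variable (k h) in
def schedule : PInstance.Sched (Ikh k h) :=
  fun p => sched k h (p.val / (2 ^ (k - 1) * h) + 1) (p.val % (2 ^ (k - 1) * h))

theorem schedule_feasible (hk : 0 < k) : (Ikh k h).Feasible (schedule k h) := by
  have hcode : Function.Injective fun p : Fin (Ikh k h).n =>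
      (p.val / (2 ^ (k - 1) * h) + 1, p.val % (2 ^ (k - 1) * h)) := by
    intro p q hpq
    simp only [Prod.mk.injEq, Nat.add_right_cancel_iff] at hpq
    exact Fin.ext (by rw [← Nat.div_add_mod p.val (2 ^ (k - 1) * h), hpq.1, hpq.2,
      Nat.div_add_mod])
  refine PInstance.Feasible.of_decode (fun p j hj => ?_) _ hcode (decode k h) (fun p j hj => ?_)
  · have hj2 := (len_eq hk p ▸ hj).trans_le packet_len_le_two
    rcases j with _ | _ | j
    · rw [PInstance.arr, rel_eq hk p]
      exact packet_rel_le_sched (Nat.le_add_left 1 _) (index_lt hk p).1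
    · have hlen2 : (packet k h _ _).2.2 = 2 :=
        le_antisymm packet_len_le_two (len_eq hk p ▸ hj)
      exact sched_zero_lt_sched_one (Nat.le_add_left 1 _) hlen2
    · omega
  · rw [start_eq hk p]
    exact decode_sched (Nat.le_add_left 1 _) (index_lt hk p).2 (len_eq hk p ▸ hj)

theorem cost_schedule_le (hk : 0 < k) :
    (Ikh k h).cost (schedule k h) ≤ 2 ^ (k - 1) * h + 3 :=
  PInstance.cost_le_of_comp_le fun p => by
    simp only [PInstance.comp, schedule, rel_eq hk p, len_eq hk p]
    exact sched_last_add_one_le hk (Nat.le_add_left 1 _) (index_lt hk p).1 (index_lt hk p).2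

end Instance

end Ikh

theorem opt_Ikh_upper_general (k h : ℕ) (hk : 2 ≤ k) :
    (∃ S : PInstance.Sched (Ikh k h), (Ikh k h).Feasible S ∧
      (Ikh k h).cost S ≤ 2 ^ (k - 1) * h + 3) ∧
    (Ikh k h).opt ≤ 2 ^ (k - 1) * h + 3 := by
  have hk : 0 < k := by omega
  exact ⟨⟨Ikh.schedule k h, Ikh.schedule_feasible hk, Ikh.cost_schedule_le hk⟩,
    (PInstance.opt_le_cost (Ikh.schedule_feasible hk)).trans (Ikh.cost_schedule_le hk)⟩

/-- For all integers `k ≥ 2` and `h ≥ 2`, there exists a feasible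
schedule for the instance `I_k^h` whose maximum flow time is at most `2^{k−1}·h + 3`;
consequently, `Opt(I_k^h) ≤ 2^{k−1}·h + 3`. -/
theorem opt_Ikh_upper (k h : ℕ) (hk : 2 ≤ k) (hh : 2 ≤ h) :
    (∃ S : PInstance.Sched (Ikh k h), (Ikh k h).Feasible S ∧
      (Ikh k h).cost S ≤ 2 ^ (k - 1) * h + 3) ∧
    (Ikh k h).opt ≤ 2 ^ (k - 1) * h + 3 :=
  opt_Ikh_upper_general k h hk
end

section
/- Let h ≥ 4 and let J_h be the instance on k = 2 routers consisting of: h packets of length 1 released at time 0 at router 1; h packets of length 2 released at time 2 at router 1; and 2h packets of length 1 released at time h + 3 at router 2. Then there exists a feasible schedule for J_h whose maximum flow time is at most 2h; consequently, Opt(J_h) ≤ 2h. -/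
/-- The instance `J_h` on `k = 2` routers: `h` packets of length `1` released at time `0`
at router `1`; `h` packets of length `2` released at time `2` at router `1`; and `2h`
packets of length `1` released at time `h + 3` at router `2`. -/
def Jh (h : ℕ) : PInstance 2 :=
  ofTriples 2 (List.replicate h (0, 1, 1) ++ List.replicate h (2, 1, 2)
    ++ List.replicate (2 * h) (h + 3, 2, 1))

/-!
Router 1 forwards the first two short packets at times `0, 1`, the long packets at times
`2, …, h + 1` and the remaining short packets at times `h + 2, …, 2h − 1`; router 2 forwards
each long packet right after it arrives (times `3, …, h + 2`) and then the late packets at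
times `h + 3, …, 3h + 2`. Every packet then finishes within `2h` steps of its release, and the
schedule is conflict-free because the packet using a slot can be read off from the slot.
-/

namespace PInstance

variable {k : ℕ} (I : PInstance k)

theorem opt_le_cost_s12 {S : Sched I} (hS : I.Feasible S) : I.opt ≤ I.cost S :=
  Nat.sInf_le ⟨S, hS, rfl⟩

theorem cost_le_iff {S : Sched I} {c : ℕ} : I.cost S ≤ c ↔ ∀ p, I.flowTime S p ≤ c := by
  simp [cost, Finset.sup_le_iff]

theorem feasible_of_slotOwner {S : Sched I} (owner : ℕ → ℕ → ℕ)
    (havail : ∀ p j, j < I.len p → I.arr S p j ≤ S p j)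
    (howner : ∀ p j, j < I.len p → owner (I.start p + j) (S p j) = p.val) :
    I.Feasible S := by
  refine ⟨havail, fun p q jp jq hjp hjq hrouter htime => Fin.ext ?_⟩
  rw [← howner p jp hjp, ← howner q jq hjq, hrouter, htime]

end PInstance

open PInstance

section Jh

variable (h : ℕ)

theorem Jh_n : (Jh h).n = 4 * h := by
  simp only [Jh, ofTriples, List.length_append, List.length_replicate]
  ring

theorem Jh_cases (p : Fin (Jh h).n) :
    (p.val < h ∧ (Jh h).rel p = 0 ∧ (Jh h).start p = 1 ∧ (Jh h).len p = 1) ∨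
    (h ≤ p.val ∧ p.val < 2 * h ∧ (Jh h).rel p = 2 ∧ (Jh h).start p = 1 ∧ (Jh h).len p = 2) ∨
    (2 * h ≤ p.val ∧ p.val < 4 * h ∧ (Jh h).rel p = h + 3 ∧ (Jh h).start p = 2 ∧
      (Jh h).len p = 1) := by
  have hp : p.val < 4 * h := Jh_n h ▸ p.isLt
  rcases lt_or_ge p.val h with hshort | hlong
  · left
    refine ⟨hshort, ?_, ?_, ?_⟩ <;> simp [Jh, ofTriples, hshort]
  have hnot_short : ¬ p.val < h := Nat.not_lt.mpr hlong
  rcases lt_or_ge p.val (2 * h) with hlong' | hlate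
  · have hidx : p.val - h < h := by omega
    right; left
    refine ⟨hlong, hlong', ?_, ?_, ?_⟩ <;>
      simp [Jh, ofTriples, List.getElem_append, hnot_short, hidx]
  · have hidx : ¬ p.val - h < h := by omega
    right; right
    refine ⟨hlate, hp, ?_, ?_, ?_⟩ <;>
      simp [Jh, ofTriples, List.getElem_append, hnot_short, hidx]

def jhSched : Sched (Jh h) := fun p j =>
  if p.val < h then (if p.val < 2 then p.val else p.val + h)
  else if p.val < 2 * h then p.val - h + 2 + j
  else p.val + 3 - h

def jhSlotOwner (i t : ℕ) : ℕ :=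
  if i = 1 then (if t < 2 then t else if t < h + 2 then t + h - 2 else t - h)
  else t + h - 3

theorem jhSched_available (p : Fin (Jh h).n) (j : ℕ) (hj : j < (Jh h).len p) :
    (Jh h).arr (jhSched h) p j ≤ jhSched h p j := by
  rcases Jh_cases h p with ⟨hp, hr, -, hl⟩ | ⟨hp, hp', hr, -, hl⟩ | ⟨hp, -, hr, -, hl⟩ <;>
    rw [hl] at hj <;> interval_cases j <;>
    simp only [arr, hr, jhSched] <;> split_ifs <;> omega

theorem jhSlotOwner_jhSched (p : Fin (Jh h).n) (j : ℕ) (hj : j < (Jh h).len p) :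
    jhSlotOwner h ((Jh h).start p + j) (jhSched h p j) = p.val := by
  rcases Jh_cases h p with ⟨hp, -, hs, hl⟩ | ⟨hp, hp', -, hs, hl⟩ | ⟨hp, -, -, hs, hl⟩ <;>
    rw [hl] at hj <;> interval_cases j <;>
    simp only [hs, jhSlotOwner, jhSched] <;> split_ifs <;> omega

theorem jhSched_feasible : (Jh h).Feasible (jhSched h) :=
  (Jh h).feasible_of_slotOwner (jhSlotOwner h) (jhSched_available h) (jhSlotOwner_jhSched h)

theorem flowTime_jhSched_le (p : Fin (Jh h).n) : (Jh h).flowTime (jhSched h) p ≤ 2 * h := by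
  rcases Jh_cases h p with ⟨hp, hr, -, hl⟩ | ⟨hp, hp', hr, -, hl⟩ | ⟨hp, hp', hr, -, hl⟩ <;>
    simp only [flowTime, comp, hl, hr, jhSched] <;> split_ifs <;> omega

end Jh

theorem opt_Jh_upper_general (h : ℕ) :
    (∃ S : PInstance.Sched (Jh h), (Jh h).Feasible S ∧ (Jh h).cost S ≤ 2 * h) ∧
    (Jh h).opt ≤ 2 * h := by
  have hcost : (Jh h).cost (jhSched h) ≤ 2 * h :=
    (Jh h).cost_le_iff.mpr (flowTime_jhSched_le h)
  exact ⟨⟨jhSched h, jhSched_feasible h, hcost⟩,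
    ((Jh h).opt_le_cost_s12 (jhSched_feasible h)).trans hcost⟩

/-- Let `h ≥ 4`.  Then there exists a feasible schedule for `J_h` whose
maximum flow time is at most `2h`; consequently, `Opt(J_h) ≤ 2h`. -/
theorem opt_Jh_upper (h : ℕ) (hh : 4 ≤ h) :
    (∃ S : PInstance.Sched (Jh h), (Jh h).Feasible S ∧ (Jh h).cost S ≤ 2 * h) ∧
    (Jh h).opt ≤ 2 * h :=
  opt_Jh_upper_general h
end
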